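/- arXiv:1310.6113 — 5 statements merged into one kernel-verified Lean document; each statement's English description precedes it below -/
import Mathlib

section
/- Let t ≥ 1, let n₁,…,n_t ≥ 1 be integers with n = n₁+⋯+n_t, and let m₁,…,m_t be integers satisfying the invariant conditions for one shift-minimal winning vector (1 ≤ m₁ ≤ n₁; and, if t ≥ 2, 1 ≤ m_h ≤ n_h−1 for all 2 ≤ h ≤ t−1 and 0 ≤ m_t ≤ n_t−1). Assume the game is non-trivial, i.e. m₁ ≤ n₁−1 and, if t ≥ 2, m_t ≥ 1. Then the complete game with minimum (m₁,…,m_t) is weighted if and only if t = 1, or t = 2 and m₂ ∈ {1, n₂−1}. -/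
open Finset

/-- A game given by its winning-coalition predicate on `Fin n` is weighted if there exist
nonnegative real weights and a positive quota such that a coalition is winning iff its
total weight reaches the quota. -/
def IsWeightedGame {n : ℕ} (Win : Finset (Fin n) → Prop) : Prop :=
  ∃ (w : Fin n → ℝ) (q : ℝ), (∀ i, 0 ≤ w i) ∧ 0 < q ∧
    ∀ S : Finset (Fin n), Win S ↔ q ≤ ∑ i ∈ S, w i

/-- The number of players of `S` belonging to block `h`, where the player set
`Fin (n₁ + ⋯ + n_t)` is partitioned into consecutive blocks of sizes `nvec 0, …, nvec (t-1)`. -/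
def blockCount {t : ℕ} (nvec : Fin t → ℕ) (S : Finset (Fin (∑ h, nvec h))) (h : Fin t) : ℕ :=
  (S.filter fun i : Fin (∑ h, nvec h) => (∑ h' ∈ Finset.Iio h, nvec h') ≤ (i : ℕ) ∧
      (i : ℕ) < (∑ h' ∈ Finset.Iio h, nvec h') + nvec h).card

/-- Winning predicate of the complete game with minimum `(m₁,…,m_t)`: a coalition `S` is winning
iff `Σ_{h=1}^{k} |S ∩ N_h| ≥ Σ_{h=1}^{k} m_h` for every `k`. -/
def CGMinWinning {t : ℕ} (nvec mvec : Fin t → ℕ) (S : Finset (Fin (∑ h, nvec h))) : Prop :=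
  ∀ k : Fin t, (∑ h ∈ Finset.Iic k, mvec h) ≤ ∑ h ∈ Finset.Iic k, blockCount nvec S h

namespace CGM

variable {t : ℕ} (nvec : Fin t → ℕ)

def cgOff (h : Fin t) : ℕ := ∑ h' ∈ Finset.Iio h, nvec h'

lemma Iio_fin_zero (h0 : 0 < t) : Finset.Iio (⟨0, h0⟩ : Fin t) = ∅ := by
  ext a; simp [Fin.lt_def]

lemma Iic_fin_zero (h0 : 0 < t) : Finset.Iic (⟨0, h0⟩ : Fin t) = {⟨0, h0⟩} := by
  ext a
  simp only [Finset.mem_Iic, Finset.mem_singleton, Fin.le_def, Fin.ext_iff, Fin.val_mk]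
  omega

lemma Iio_fin_succ (k : ℕ) (hk : k + 1 < t) :
    Finset.Iio (⟨k + 1, hk⟩ : Fin t) = insert ⟨k, by omega⟩ (Finset.Iio ⟨k, by omega⟩) := by
  ext a
  simp only [Finset.mem_Iio, Finset.mem_insert, Fin.lt_def, Fin.ext_iff, Fin.val_mk]
  omega

lemma Iic_fin_succ (k : ℕ) (hk : k + 1 < t) :
    Finset.Iic (⟨k + 1, hk⟩ : Fin t) = insert ⟨k + 1, hk⟩ (Finset.Iic ⟨k, by omega⟩) := by
  ext a
  simp only [Finset.mem_Iic, Finset.mem_insert, Fin.le_def, Fin.ext_iff, Fin.val_mk]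
  omega

lemma cgOff_zero (h0 : 0 < t) : cgOff nvec ⟨0, h0⟩ = 0 := by
  simp [cgOff, Iio_fin_zero]

lemma cgOff_succ (k : ℕ) (hk : k + 1 < t) :
    cgOff nvec ⟨k + 1, hk⟩ = cgOff nvec ⟨k, by omega⟩ + nvec ⟨k, by omega⟩ := by
  rw [cgOff, Iio_fin_succ, Finset.sum_insert (by simp [Fin.lt_def])]
  rw [add_comm]; rfl

lemma sum_Iic_eq_off (h : Fin t) : ∑ h' ∈ Finset.Iic h, nvec h' = cgOff nvec h + nvec h := by
  rw [← Finset.Iio_insert, Finset.sum_insert (by simp), add_comm]; rfl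

lemma cgOff_add_le {h h' : Fin t} (hh : h < h') : cgOff nvec h + nvec h ≤ cgOff nvec h' := by
  rw [← sum_Iic_eq_off]
  exact Finset.sum_le_sum_of_subset (fun a ha => by
    simp only [Finset.mem_Iic] at ha; exact Finset.mem_Iio.2 (lt_of_le_of_lt ha hh))

lemma cgOff_block_le (h : Fin t) : cgOff nvec h + nvec h ≤ ∑ x, nvec x := by
  rw [← sum_Iic_eq_off]
  exact Finset.sum_le_sum_of_subset (Finset.subset_univ _)

lemma card_filter_val {N : ℕ} (P : ℕ → Prop) [DecidablePred P] :
    (Finset.univ.filter fun i : Fin N => P i.val).card = ((Finset.range N).filter P).card := by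
  apply Finset.card_bij (fun i _ => i.val)
  · intro a ha; simp only [Finset.mem_filter, Finset.mem_univ, true_and] at ha
    simp [Finset.mem_filter, Finset.mem_range, a.isLt, ha]
  · intro a _ b _ hab; exact Fin.ext hab
  · intro b hb; simp only [Finset.mem_filter, Finset.mem_range] at hb
    exact ⟨⟨b, hb.1⟩, by simp [hb.2], rfl⟩

lemma blockCount_filter (P : ℕ → Prop) [DecidablePred P] (h : Fin t) :
    blockCount nvec (Finset.univ.filter fun i => P i.val) h
      = ((Finset.range (∑ x, nvec x)).filter fun x =>
          P x ∧ cgOff nvec h ≤ x ∧ x < cgOff nvec h + nvec h).card := by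
  unfold blockCount
  rw [Finset.filter_filter]
  exact card_filter_val (fun x => P x ∧ cgOff nvec h ≤ x ∧ x < cgOff nvec h + nvec h)

lemma filter_range_Ico (N a b : ℕ) (hbN : b ≤ N) :
    ((Finset.range N).filter fun x => a ≤ x ∧ x < b) = Finset.Ico a b := by
  ext x; simp [Finset.mem_Ico, Finset.mem_range]; omega

lemma blockCount_le (S : Finset (Fin (∑ h, nvec h))) (h : Fin t) :
    blockCount nvec S h ≤ nvec h := by
  unfold blockCount
  calc (S.filter _).card ≤ (Finset.univ.filter fun i : Fin (∑ h, nvec h) =>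
        cgOff nvec h ≤ (i:ℕ) ∧ (i:ℕ) < cgOff nvec h + nvec h).card := by
        exact Finset.card_le_card (Finset.filter_subset_filter _ (Finset.subset_univ S))
    _ = nvec h := by
        rw [card_filter_val (fun x => cgOff nvec h ≤ x ∧ x < cgOff nvec h + nvec h),
          filter_range_Ico _ _ _ (cgOff_block_le nvec h), Nat.card_Ico]
        omega


lemma weighted_t1 (nvec mvec : Fin 1 → ℕ) (hm : 1 ≤ mvec 0) :
    IsWeightedGame (CGMinWinning nvec mvec) := by
  refine ⟨fun _ => 1, ((mvec 0 : ℕ) : ℝ), fun _ => zero_le_one, by exact_mod_cast hm, ?_⟩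
  intro S
  have hbc : blockCount nvec S 0 = S.card := by
    unfold blockCount
    rw [Finset.filter_true_of_mem]
    intro i _
    have h1 : Finset.Iio (0 : Fin 1) = ∅ := by decide
    have h2 := i.isLt
    have key : ∑ h : Fin 1, nvec h = nvec 0 := Fin.sum_univ_one _
    simp only [h1, Finset.sum_empty]
    omega
  have hwin : CGMinWinning nvec mvec S ↔ mvec 0 ≤ S.card := by
    unfold CGMinWinning
    rw [Fin.forall_fin_one]
    have h0 : Finset.Iic (0 : Fin 1) = {0} := by decide
    simp [h0, hbc]
  rw [hwin, Finset.sum_const, nsmul_eq_mul, mul_one]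
  exact Nat.cast_le.symm

lemma blockCount_t2_0 (nvec : Fin 2 → ℕ) (S : Finset (Fin (∑ h, nvec h))) :
    blockCount nvec S 0 = (S.filter fun i => i.val < nvec 0).card := by
  unfold blockCount
  congr 1
  apply Finset.filter_congr
  intro i _
  have h1 : Finset.Iio (0 : Fin 2) = ∅ := by decide
  simp only [h1, Finset.sum_empty]
  omega

lemma blockCount_t2_1 (nvec : Fin 2 → ℕ) (S : Finset (Fin (∑ h, nvec h))) :
    blockCount nvec S 1 = (S.filter fun i => ¬ i.val < nvec 0).card := by
  unfold blockCount
  congr 1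
  apply Finset.filter_congr
  intro i _
  have h1 : Finset.Iio (1 : Fin 2) = {0} := by decide
  have h2 := i.isLt
  have key : ∑ h : Fin 2, nvec h = nvec 0 + nvec 1 := Fin.sum_univ_two _
  simp only [h1, Finset.sum_singleton]
  omega

lemma sum_weights_t2 (nvec : Fin 2 → ℕ) (a b : ℕ) (S : Finset (Fin (∑ h, nvec h))) :
    ∑ i ∈ S, (if (i : ℕ) < nvec 0 then ((a : ℕ) : ℝ) else ((b : ℕ) : ℝ))
      = ((a * blockCount nvec S 0 + b * blockCount nvec S 1 : ℕ) : ℝ) := by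
  rw [← Finset.sum_filter_add_sum_filter_not S (fun i => i.val < nvec 0)]
  rw [blockCount_t2_0, blockCount_t2_1]
  push_cast
  congr 1
  · rw [Finset.sum_congr rfl (fun i hi => if_pos (Finset.mem_filter.1 hi).2)]
    rw [Finset.sum_const, nsmul_eq_mul]; ring
  · rw [Finset.sum_congr rfl (fun i hi => if_neg (Finset.mem_filter.1 hi).2)]
    rw [Finset.sum_const, nsmul_eq_mul]; ring

lemma win_iff_t2 (nvec mvec : Fin 2 → ℕ) (S : Finset (Fin (∑ h, nvec h))) :
    CGMinWinning nvec mvec S ↔ (mvec 0 ≤ blockCount nvec S 0 ∧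
      mvec 0 + mvec 1 ≤ blockCount nvec S 0 + blockCount nvec S 1) := by
  unfold CGMinWinning
  rw [Fin.forall_fin_two]
  have h0 : Finset.Iic (0 : Fin 2) = {0} := by decide
  have h1 : Finset.Iic (1 : Fin 2) = {0, 1} := by decide
  rw [h0, h1]
  simp [Finset.sum_pair (by decide : (0 : Fin 2) ≠ 1)]

lemma blockCount_le' {t : ℕ} (nvec : Fin t → ℕ) (S : Finset (Fin (∑ h, nvec h))) (h : Fin t) :
    blockCount nvec S h ≤ nvec h := blockCount_le nvec S h

lemma weighted_t2_a (nvec mvec : Fin 2 → ℕ) (hm0 : 1 ≤ mvec 0) (hm0' : mvec 0 + 1 ≤ nvec 0)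
    (hm1 : mvec 1 = 1) : IsWeightedGame (CGMinWinning nvec mvec) := by
  refine ⟨fun i => if (i : ℕ) < nvec 0 then ((nvec 1 + 1 : ℕ) : ℝ) else ((1 : ℕ) : ℝ),
    ((mvec 0 * (nvec 1 + 1) + 1 : ℕ) : ℝ), ?_, ?_, ?_⟩
  · intro i; dsimp only; split <;> positivity
  · have : 0 < mvec 0 * (nvec 1 + 1) + 1 := by positivity
    exact_mod_cast this
  · intro S
    rw [win_iff_t2, sum_weights_t2 nvec (nvec 1 + 1) 1 S, Nat.cast_le, hm1]
    have hc0 : blockCount nvec S 0 ≤ nvec 0 := blockCount_le' nvec S 0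
    have hc1 : blockCount nvec S 1 ≤ nvec 1 := blockCount_le' nvec S 1
    set c0 := blockCount nvec S 0
    set c1 := blockCount nvec S 1
    set m0 := mvec 0
    set n1 := nvec 1
    constructor
    · rintro ⟨h1, h2⟩
      rcases eq_or_lt_of_le h1 with heq | hlt
      · have hc1' : 1 ≤ c1 := by omega
        calc m0 * (n1 + 1) + 1 ≤ m0 * (n1 + 1) + c1 := by omega
          _ = (n1 + 1) * c0 + 1 * c1 := by rw [← heq]; ring
      · have h3 : (m0 + 1) * (n1 + 1) ≤ c0 * (n1 + 1) := Nat.mul_le_mul_right _ hlt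
        nlinarith
    · intro H
      have key1 : m0 ≤ c0 := by
        by_contra hcon
        push_neg at hcon
        have h3 : (c0 + 1) * (n1 + 1) ≤ m0 * (n1 + 1) := Nat.mul_le_mul_right _ hcon
        nlinarith
      refine ⟨key1, ?_⟩
      by_contra hcon
      push_neg at hcon
      have hc1z : c1 = 0 := by omega
      have hc0e : c0 = m0 := by omega
      rw [hc0e, hc1z] at H
      nlinarith

lemma weighted_t2_b (nvec mvec : Fin 2 → ℕ) (hm0 : 1 ≤ mvec 0) (hm0' : mvec 0 + 1 ≤ nvec 0)
    (hm1 : mvec 1 + 1 = nvec 1) (hm1pos : 1 ≤ mvec 1) :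
    IsWeightedGame (CGMinWinning nvec mvec) := by
  refine ⟨fun i => if (i : ℕ) < nvec 0 then ((2 * nvec 0 + 3 : ℕ) : ℝ) else ((2 * nvec 0 + 2 : ℕ) : ℝ),
    (((2 * nvec 0 + 3) * mvec 0 + (2 * nvec 0 + 2) * mvec 1 : ℕ) : ℝ), ?_, ?_, ?_⟩
  · intro i; dsimp only; split <;> positivity
  · have : 0 < (2 * nvec 0 + 3) * mvec 0 + (2 * nvec 0 + 2) * mvec 1 := by positivity
    exact_mod_cast this
  · intro S
    rw [win_iff_t2, sum_weights_t2 nvec (2 * nvec 0 + 3) (2 * nvec 0 + 2) S, Nat.cast_le]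
    have hc0 : blockCount nvec S 0 ≤ nvec 0 := blockCount_le' nvec S 0
    have hc1 : blockCount nvec S 1 ≤ nvec 1 := blockCount_le' nvec S 1
    set c0 := blockCount nvec S 0
    set c1 := blockCount nvec S 1
    set m0 := mvec 0
    set m1 := mvec 1
    set n0 := nvec 0
    constructor
    · rintro ⟨h1, h2⟩
      have h3 : (2 * n0 + 2) * (m0 + m1) ≤ (2 * n0 + 2) * (c0 + c1) :=
        Nat.mul_le_mul_left _ h2
      nlinarith
    · intro H
      have key1 : m0 ≤ c0 := by
        by_contra hcon
        push_neg at hcon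
        have h3 : (2 * n0 + 3) * (c0 + 1) ≤ (2 * n0 + 3) * m0 := Nat.mul_le_mul_left _ hcon
        have h4 : (2 * n0 + 2) * c1 ≤ (2 * n0 + 2) * (m1 + 1) := by
          apply Nat.mul_le_mul_left; omega
        nlinarith
      refine ⟨key1, ?_⟩
      by_contra hcon
      push_neg at hcon
      have h3 : (2 * n0 + 2) * (c0 + c1 + 1) ≤ (2 * n0 + 2) * (m0 + m1) := by
        apply Nat.mul_le_mul_left; omega
      nlinarith


lemma card_eval_Ico (N a b v : ℕ) (P : ℕ → Prop) [DecidablePred P]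
    (hiff : ∀ x, x < N → (P x ↔ (a ≤ x ∧ x < b))) (hbN : b ≤ N) (hv : b - a = v) :
    ((Finset.range N).filter P).card = v := by
  have hset : (Finset.range N).filter P = Finset.Ico a b := by
    ext x
    simp only [Finset.mem_filter, Finset.mem_range, Finset.mem_Ico]
    constructor
    · rintro ⟨h1, h2⟩; exact (hiff x h1).1 h2
    · intro hx
      have hxN : x < N := lt_of_lt_of_le hx.2 hbN
      exact ⟨hxN, (hiff x hxN).2 hx⟩
  rw [hset, Nat.card_Ico, hv]

lemma card_eval_pair (N a b c v : ℕ) (P : ℕ → Prop) [DecidablePred P]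
    (hiff : ∀ x, x < N → (P x ↔ ((a ≤ x ∧ x < b) ∨ x = c))) (hbN : b ≤ N) (hcN : c < N)
    (hbc : b ≤ c) (hv : b - a + 1 = v) :
    ((Finset.range N).filter P).card = v := by
  have hset : (Finset.range N).filter P = insert c (Finset.Ico a b) := by
    ext x
    simp only [Finset.mem_filter, Finset.mem_range, Finset.mem_insert, Finset.mem_Ico]
    constructor
    · rintro ⟨h1, h2⟩
      rcases (hiff x h1).1 h2 with h | h
      · exact Or.inr h
      · exact Or.inl h
    · rintro (rfl | hx)
      · exact ⟨hcN, (hiff _ hcN).2 (Or.inr rfl)⟩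
      · have hxN : x < N := lt_of_lt_of_le hx.2 hbN
        exact ⟨hxN, (hiff x hxN).2 (Or.inl hx)⟩
  rw [hset, Finset.card_insert_of_notMem (by simp only [Finset.mem_Ico]; omega),
    Nat.card_Ico, hv]

lemma card_eval_two (N a b a' b' v : ℕ) (P : ℕ → Prop) [DecidablePred P]
    (hiff : ∀ x, x < N → (P x ↔ ((a ≤ x ∧ x < b) ∨ (a' ≤ x ∧ x < b'))))
    (hbN : b ≤ N) (hbN' : b' ≤ N) (hdisj : b ≤ a') (hv : (b - a) + (b' - a') = v) :
    ((Finset.range N).filter P).card = v := by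
  have hset : (Finset.range N).filter P = Finset.Ico a b ∪ Finset.Ico a' b' := by
    ext x
    simp only [Finset.mem_filter, Finset.mem_range, Finset.mem_union, Finset.mem_Ico]
    constructor
    · rintro ⟨h1, h2⟩; exact (hiff x h1).1 h2
    · rintro (hx | hx)
      · have hxN : x < N := lt_of_lt_of_le hx.2 hbN
        exact ⟨hxN, (hiff x hxN).2 (Or.inl hx)⟩
      · have hxN : x < N := lt_of_lt_of_le hx.2 hbN'
        exact ⟨hxN, (hiff x hxN).2 (Or.inr hx)⟩
  rw [hset, Finset.card_union_of_disjoint, Nat.card_Ico, Nat.card_Ico, hv]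
  rw [Finset.disjoint_left]
  intro x hx hx'
  simp only [Finset.mem_Ico] at hx hx'
  omega


lemma not_weighted_t2 (nvec mvec : Fin 2 → ℕ)
    (hm0 : 1 ≤ mvec 0) (hm0' : mvec 0 + 1 ≤ nvec 0)
    (hm1 : 2 ≤ mvec 1) (hm1' : mvec 1 + 2 ≤ nvec 1) :
    ¬ IsWeightedGame (CGMinWinning nvec mvec) := by
  classical
  rintro ⟨w, q, hw, hq, hiff⟩
  have ho0 : cgOff nvec (0 : Fin 2) = 0 := by
    rw [cgOff, show Finset.Iio (0 : Fin 2) = ∅ from by decide, Finset.sum_empty]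
  have ho1 : cgOff nvec (1 : Fin 2) = nvec 0 := by
    rw [cgOff, show Finset.Iio (1 : Fin 2) = {0} from by decide, Finset.sum_singleton]
  have hNsum : (∑ h : Fin 2, nvec h) = nvec 0 + nvec 1 := Fin.sum_univ_two _
  set P1 : ℕ → Prop := fun x => x < mvec 0 ∨ (nvec 0 ≤ x ∧ x < nvec 0 + mvec 1) with hP1
  set P2 : ℕ → Prop := fun x => x < mvec 0 - 1 ∨ x = mvec 0
      ∨ (nvec 0 ≤ x ∧ x < nvec 0 + mvec 1 - 2)
      ∨ (nvec 0 + mvec 1 ≤ x ∧ x < nvec 0 + mvec 1 + 2) with hP2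
  set P3 : ℕ → Prop := fun x => x < mvec 0 - 1 ∨ (nvec 0 ≤ x ∧ x < nvec 0 + mvec 1 + 2) with hP3
  set P4 : ℕ → Prop := fun x => x < mvec 0 + 1 ∨ (nvec 0 ≤ x ∧ x < nvec 0 + mvec 1 - 2) with hP4
  have cS1_0 : blockCount nvec (Finset.univ.filter fun i => P1 i.val) 0 = mvec 0 := by
    rw [blockCount_filter nvec P1 0]
    simp only [ho0]
    exact card_eval_Ico _ 0 (mvec 0) _ _
      (fun x hx => by simp only [hP1]; omega) (by omega) (by omega)
  have cS1_1 : blockCount nvec (Finset.univ.filter fun i => P1 i.val) 1 = mvec 1 := by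
    rw [blockCount_filter nvec P1 1]
    simp only [ho1]
    exact card_eval_Ico _ (nvec 0) (nvec 0 + mvec 1) _ _
      (fun x hx => by simp only [hP1]; omega) (by omega) (by omega)
  have cS2_0 : blockCount nvec (Finset.univ.filter fun i => P2 i.val) 0 = mvec 0 := by
    rw [blockCount_filter nvec P2 0]
    simp only [ho0]
    exact card_eval_pair _ 0 (mvec 0 - 1) (mvec 0) _ _
      (fun x hx => by simp only [hP2]; omega) (by omega) (by omega) (by omega) (by omega)
  have cS2_1 : blockCount nvec (Finset.univ.filter fun i => P2 i.val) 1 = mvec 1 := by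
    rw [blockCount_filter nvec P2 1]
    simp only [ho1]
    exact card_eval_two _ (nvec 0) (nvec 0 + mvec 1 - 2) (nvec 0 + mvec 1)
      (nvec 0 + mvec 1 + 2) _ _
      (fun x hx => by simp only [hP2]; omega) (by omega) (by omega) (by omega) (by omega)
  have cT1_0 : blockCount nvec (Finset.univ.filter fun i => P3 i.val) 0 = mvec 0 - 1 := by
    rw [blockCount_filter nvec P3 0]
    simp only [ho0]
    exact card_eval_Ico _ 0 (mvec 0 - 1) _ _
      (fun x hx => by simp only [hP3]; omega) (by omega) (by omega)
  have cT1_1 : blockCount nvec (Finset.univ.filter fun i => P3 i.val) 1 = mvec 1 + 2 := by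
    rw [blockCount_filter nvec P3 1]
    simp only [ho1]
    exact card_eval_Ico _ (nvec 0) (nvec 0 + mvec 1 + 2) _ _
      (fun x hx => by simp only [hP3]; omega) (by omega) (by omega)
  have cT2_0 : blockCount nvec (Finset.univ.filter fun i => P4 i.val) 0 = mvec 0 + 1 := by
    rw [blockCount_filter nvec P4 0]
    simp only [ho0]
    exact card_eval_Ico _ 0 (mvec 0 + 1) _ _
      (fun x hx => by simp only [hP4]; omega) (by omega) (by omega)
  have cT2_1 : blockCount nvec (Finset.univ.filter fun i => P4 i.val) 1 = mvec 1 - 2 := by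
    rw [blockCount_filter nvec P4 1]
    simp only [ho1]
    exact card_eval_Ico _ (nvec 0) (nvec 0 + mvec 1 - 2) _ _
      (fun x hx => by simp only [hP4]; omega) (by omega) (by omega)
  have winS1 : CGMinWinning nvec mvec (Finset.univ.filter fun i => P1 i.val) := by
    rw [win_iff_t2, cS1_0, cS1_1]; omega
  have winS2 : CGMinWinning nvec mvec (Finset.univ.filter fun i => P2 i.val) := by
    rw [win_iff_t2, cS2_0, cS2_1]; omega
  have losT1 : ¬ CGMinWinning nvec mvec (Finset.univ.filter fun i => P3 i.val) := by
    rw [win_iff_t2, cT1_0, cT1_1]; omega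
  have losT2 : ¬ CGMinWinning nvec mvec (Finset.univ.filter fun i => P4 i.val) := by
    rw [win_iff_t2, cT2_0, cT2_1]; omega
  have hU : (Finset.univ.filter fun i : Fin (∑ h, nvec h) => P1 i.val)
        ∪ (Finset.univ.filter fun i => P2 i.val)
      = (Finset.univ.filter fun i => P3 i.val) ∪ (Finset.univ.filter fun i => P4 i.val) := by
    rw [← Finset.filter_or, ← Finset.filter_or]
    apply Finset.filter_congr
    intro i _
    simp only [hP1, hP2, hP3, hP4]
    omega
  have hI : (Finset.univ.filter fun i : Fin (∑ h, nvec h) => P1 i.val)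
        ∩ (Finset.univ.filter fun i => P2 i.val)
      = (Finset.univ.filter fun i => P3 i.val) ∩ (Finset.univ.filter fun i => P4 i.val) := by
    rw [← Finset.filter_and, ← Finset.filter_and]
    apply Finset.filter_congr
    intro i _
    simp only [hP1, hP2, hP3, hP4]
    omega
  have key : ∑ i ∈ (Finset.univ.filter fun i : Fin (∑ h, nvec h) => P1 i.val), w i
      + ∑ i ∈ (Finset.univ.filter fun i => P2 i.val), w i
      = ∑ i ∈ (Finset.univ.filter fun i => P3 i.val), w i
      + ∑ i ∈ (Finset.univ.filter fun i => P4 i.val), w i := by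
    rw [← Finset.sum_union_inter, hU, hI, Finset.sum_union_inter]
  have w1 := (hiff _).1 winS1
  have w2 := (hiff _).1 winS2
  have l1 : ∑ i ∈ (Finset.univ.filter fun i : Fin (∑ h, nvec h) => P3 i.val), w i < q :=
    lt_of_not_ge (fun hc => losT1 ((hiff _).2 hc))
  have l2 : ∑ i ∈ (Finset.univ.filter fun i : Fin (∑ h, nvec h) => P4 i.val), w i < q :=
    lt_of_not_ge (fun hc => losT2 ((hiff _).2 hc))
  linarith


def Pad (nvec mvec : Fin t → ℕ) (x : ℕ) : Prop :=
  ∃ h : Fin t, 3 ≤ h.val ∧ cgOff nvec h ≤ x ∧ x < cgOff nvec h + mvec h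

instance (nvec mvec : Fin t → ℕ) : DecidablePred (Pad nvec mvec) := fun x => by
  unfold Pad; infer_instance

lemma blockCount_pad_low (nvec mvec : Fin t → ℕ) (Q : ℕ → Prop) [DecidablePred Q]
    (h : Fin t) (hh : h.val < 3) :
    blockCount nvec (Finset.univ.filter fun i => Q i.val ∨ Pad nvec mvec i.val) h
      = ((Finset.range (∑ x, nvec x)).filter fun x =>
          Q x ∧ cgOff nvec h ≤ x ∧ x < cgOff nvec h + nvec h).card := by
  rw [blockCount_filter nvec (fun x => Q x ∨ Pad nvec mvec x) h]
  congr 1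
  apply Finset.filter_congr
  intro x _
  constructor
  · rintro ⟨hq | hpad, hx⟩
    · exact ⟨hq, hx⟩
    · exfalso
      obtain ⟨h', h3, hox, _⟩ := hpad
      have hlt : h < h' := by rw [Fin.lt_def]; omega
      have := cgOff_add_le nvec hlt
      omega
  · rintro ⟨hq, hx⟩; exact ⟨Or.inl hq, hx⟩

lemma blockCount_pad_high (nvec mvec : Fin t → ℕ) (hT : 3 ≤ t)
    (hmle : ∀ h, mvec h ≤ nvec h) (Q : ℕ → Prop) [DecidablePred Q]
    (hQb : ∀ x, Q x → x < cgOff nvec ⟨2, by omega⟩ + nvec ⟨2, by omega⟩)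
    (h : Fin t) (hh : 3 ≤ h.val) :
    blockCount nvec (Finset.univ.filter fun i => Q i.val ∨ Pad nvec mvec i.val) h
      = mvec h := by
  rw [blockCount_filter nvec (fun x => Q x ∨ Pad nvec mvec x) h]
  have hset : ((Finset.range (∑ x, nvec x)).filter fun x =>
      (Q x ∨ Pad nvec mvec x) ∧ cgOff nvec h ≤ x ∧ x < cgOff nvec h + nvec h)
      = Finset.Ico (cgOff nvec h) (cgOff nvec h + mvec h) := by
    ext x
    simp only [Finset.mem_filter, Finset.mem_range, Finset.mem_Ico]
    constructor
    · rintro ⟨hxN, hq | hpad, hx1, hx2⟩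
      · exfalso
        have h2lt : (⟨2, by omega⟩ : Fin t) < h := by rw [Fin.lt_def]; show 2 < h.val; omega
        have h1 := cgOff_add_le nvec h2lt
        have h2 := hQb x hq
        omega
      · obtain ⟨h', h3', hox1, hox2⟩ := hpad
        rcases lt_trichotomy h'.val h.val with hlt | heq | hgt
        · exfalso
          have h1 := cgOff_add_le nvec (show h' < h by rw [Fin.lt_def]; exact hlt)
          have h2 := hmle h'
          omega
        · have he : h' = h := Fin.ext heq
          subst he
          exact ⟨hox1, hox2⟩
        · exfalso
          have h1 := cgOff_add_le nvec (show h < h' by rw [Fin.lt_def]; exact hgt)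
          omega
    · rintro ⟨hx1, hx2⟩
      have hms := hmle h
      have hbl := cgOff_block_le nvec h
      exact ⟨by omega, Or.inr ⟨h, hh, hx1, by omega⟩, hx1, by omega⟩
  rw [hset, Nat.card_Ico]
  omega


lemma Iic_fin_two {t : ℕ} (h2t : 2 < t) :
    Finset.Iic (⟨2, h2t⟩ : Fin t) =
      {⟨0, by omega⟩, ⟨1, by omega⟩, ⟨2, h2t⟩} := by
  ext a
  simp only [Finset.mem_Iic, Finset.mem_insert, Finset.mem_singleton, Fin.le_def,
    Fin.ext_iff, Fin.val_mk]
  omega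

lemma sum_Iic_two {t : ℕ} (h0t : 0 < t) (h1t : 1 < t) (h2t : 2 < t) (g : Fin t → ℕ) :
    ∑ h ∈ Finset.Iic (⟨2, h2t⟩ : Fin t), g h
      = g ⟨0, h0t⟩ + g ⟨1, h1t⟩ + g ⟨2, h2t⟩ := by
  rw [Iic_fin_two h2t]
  rw [show (⟨0, by omega⟩ : Fin t) = ⟨0, h0t⟩ from rfl, show (⟨1, by omega⟩ : Fin t) = ⟨1, h1t⟩ from rfl]
  rw [Finset.sum_insert (by simp [Fin.ext_iff]),
    Finset.sum_insert (by simp [Fin.ext_iff]), Finset.sum_singleton]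
  omega

lemma or_pad_congr {A B C D P : Prop} (base : A ∨ B ↔ C ∨ D) :
    (A ∨ P) ∨ (B ∨ P) ↔ (C ∨ P) ∨ (D ∨ P) := by tauto

lemma and_pad_congr {A B C D P : Prop} (base : A ∧ B ↔ C ∧ D) :
    (A ∨ P) ∧ (B ∨ P) ↔ (C ∨ P) ∧ (D ∨ P) := by tauto

lemma trade_sum {α : Type*} [DecidableEq α] [Fintype α] (w : α → ℝ)
    (p1 p2 p3 p4 : α → Prop) [DecidablePred p1] [DecidablePred p2] [DecidablePred p3]
    [DecidablePred p4]
    (hU : ∀ x, p1 x ∨ p2 x ↔ p3 x ∨ p4 x) (hI : ∀ x, p1 x ∧ p2 x ↔ p3 x ∧ p4 x) :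
    ∑ i ∈ Finset.univ.filter p1, w i + ∑ i ∈ Finset.univ.filter p2, w i
      = ∑ i ∈ Finset.univ.filter p3, w i + ∑ i ∈ Finset.univ.filter p4, w i := by
  have hu : Finset.univ.filter p1 ∪ Finset.univ.filter p2
      = Finset.univ.filter p3 ∪ Finset.univ.filter p4 := by
    rw [← Finset.filter_or, ← Finset.filter_or]
    exact Finset.filter_congr (fun x _ => hU x)
  have hi : Finset.univ.filter p1 ∩ Finset.univ.filter p2
      = Finset.univ.filter p3 ∩ Finset.univ.filter p4 := by
    rw [← Finset.filter_and, ← Finset.filter_and]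
    exact Finset.filter_congr (fun x _ => hI x)
  rw [← Finset.sum_union_inter, hu, hi, Finset.sum_union_inter]

set_option maxHeartbeats 2000000 in
lemma not_weighted_t3 (nvec mvec : Fin t → ℕ) (hT : 3 ≤ t)
    (hmle : ∀ h, mvec h ≤ nvec h)
    (hm0 : 1 ≤ mvec ⟨0, by omega⟩) (hm0' : mvec ⟨0, by omega⟩ + 1 ≤ nvec ⟨0, by omega⟩)
    (hm1 : 1 ≤ mvec ⟨1, by omega⟩) (hm1' : mvec ⟨1, by omega⟩ + 1 ≤ nvec ⟨1, by omega⟩)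
    (hm2 : 1 ≤ mvec ⟨2, by omega⟩) (hm2' : mvec ⟨2, by omega⟩ + 1 ≤ nvec ⟨2, by omega⟩) :
    ¬ IsWeightedGame (CGMinWinning nvec mvec) := by
  classical
  rintro ⟨w, q, hw, hq, hiff⟩
  have h0t : 0 < t := by omega
  have h1t : 1 < t := by omega
  have h2t : 2 < t := by omega
  have ho0 : cgOff nvec ⟨0, h0t⟩ = 0 := cgOff_zero nvec h0t
  have ho1 : cgOff nvec ⟨1, h1t⟩ = nvec ⟨0, h0t⟩ := by
    rw [cgOff_succ nvec 0 h1t, cgOff_zero, zero_add]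
  have ho2 : cgOff nvec ⟨2, h2t⟩ = nvec ⟨0, h0t⟩ + nvec ⟨1, h1t⟩ := by
    rw [cgOff_succ nvec 1 h2t, ho1]
  have hNb : nvec ⟨0, h0t⟩ + nvec ⟨1, h1t⟩ + nvec ⟨2, h2t⟩ ≤ ∑ x, nvec x := by
    have := cgOff_block_le nvec ⟨2, h2t⟩
    omega
  have hm0A : 1 ≤ mvec ⟨0, h0t⟩ := hm0
  have hm0A' : mvec ⟨0, h0t⟩ + 1 ≤ nvec ⟨0, h0t⟩ := hm0'
  have hm1A : 1 ≤ mvec ⟨1, h1t⟩ := hm1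
  have hm1A' : mvec ⟨1, h1t⟩ + 1 ≤ nvec ⟨1, h1t⟩ := hm1'
  have hm2A : 1 ≤ mvec ⟨2, h2t⟩ := hm2
  have hm2A' : mvec ⟨2, h2t⟩ + 1 ≤ nvec ⟨2, h2t⟩ := hm2'
  clear hm0 hm0' hm1 hm1' hm2 hm2'
  set Q1 : ℕ → Prop := fun x => x < (mvec ⟨0, h0t⟩) ∨ ((nvec ⟨0, h0t⟩) ≤ x ∧ x < (nvec ⟨0, h0t⟩) + (mvec ⟨1, h1t⟩))
      ∨ ((nvec ⟨0, h0t⟩) + (nvec ⟨1, h1t⟩) ≤ x ∧ x < (nvec ⟨0, h0t⟩) + (nvec ⟨1, h1t⟩) + (mvec ⟨2, h2t⟩)) with hQ1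
  set Q2 : ℕ → Prop := fun x => x < (mvec ⟨0, h0t⟩) - 1 ∨ x = (mvec ⟨0, h0t⟩) ∨ ((nvec ⟨0, h0t⟩) ≤ x ∧ x < (nvec ⟨0, h0t⟩) + (mvec ⟨1, h1t⟩) - 1)
      ∨ x = (nvec ⟨0, h0t⟩) + (mvec ⟨1, h1t⟩) ∨ ((nvec ⟨0, h0t⟩) + (nvec ⟨1, h1t⟩) ≤ x ∧ x < (nvec ⟨0, h0t⟩) + (nvec ⟨1, h1t⟩) + (mvec ⟨2, h2t⟩) - 1) ∨ x = (nvec ⟨0, h0t⟩) + (nvec ⟨1, h1t⟩) + (mvec ⟨2, h2t⟩) with hQ2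
  set Q3 : ℕ → Prop := fun x => x < (mvec ⟨0, h0t⟩) - 1 ∨ ((nvec ⟨0, h0t⟩) ≤ x ∧ x < (nvec ⟨0, h0t⟩) + (mvec ⟨1, h1t⟩) + 1)
      ∨ ((nvec ⟨0, h0t⟩) + (nvec ⟨1, h1t⟩) ≤ x ∧ x < (nvec ⟨0, h0t⟩) + (nvec ⟨1, h1t⟩) + (mvec ⟨2, h2t⟩) + 1) with hQ3
  set Q4 : ℕ → Prop := fun x => x < (mvec ⟨0, h0t⟩) + 1 ∨ ((nvec ⟨0, h0t⟩) ≤ x ∧ x < (nvec ⟨0, h0t⟩) + (mvec ⟨1, h1t⟩) - 1)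
      ∨ ((nvec ⟨0, h0t⟩) + (nvec ⟨1, h1t⟩) ≤ x ∧ x < (nvec ⟨0, h0t⟩) + (nvec ⟨1, h1t⟩) + (mvec ⟨2, h2t⟩) - 1) with hQ4
  have hQ1b : ∀ x, Q1 x → x < cgOff nvec ⟨2, h2t⟩ + nvec ⟨2, h2t⟩ := by
    intro x hx; rw [ho2]; revert hx; simp only [hQ1]; omega
  have hQ2b : ∀ x, Q2 x → x < cgOff nvec ⟨2, h2t⟩ + nvec ⟨2, h2t⟩ := by
    intro x hx; rw [ho2]; revert hx; simp only [hQ2]; omega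
  have hQ3b : ∀ x, Q3 x → x < cgOff nvec ⟨2, h2t⟩ + nvec ⟨2, h2t⟩ := by
    intro x hx; rw [ho2]; revert hx; simp only [hQ3]; omega
  have hQ4b : ∀ x, Q4 x → x < cgOff nvec ⟨2, h2t⟩ + nvec ⟨2, h2t⟩ := by
    intro x hx; rw [ho2]; revert hx; simp only [hQ4]; omega
  have hcases : ∀ h : Fin t, h.val < 3 → h = ⟨0, h0t⟩ ∨ h = ⟨1, h1t⟩ ∨ h = ⟨2, h2t⟩ := by
    intro h hh
    rcases h with ⟨v, hv⟩
    simp only [Fin.ext_iff]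
    simp only [Fin.val_mk] at hh ⊢
    omega
  -- block counts of the four coalitions
  have cS1 : ∀ h : Fin t, blockCount nvec
      (Finset.univ.filter fun i => Q1 i.val ∨ Pad nvec mvec i.val) h = mvec h := by
    intro h
    rcases Nat.lt_or_ge h.val 3 with h3 | h3
    · rcases hcases h h3 with rfl | rfl | rfl
      · rw [blockCount_pad_low nvec mvec Q1 _ (by omega)]
        simp only [ho0]
        exact card_eval_Ico _ 0 (mvec ⟨0, h0t⟩) _ _
          (fun x hx => by simp only [hQ1]; omega) (by omega) (by omega)
      · rw [blockCount_pad_low nvec mvec Q1 _ (by omega)]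
        simp only [ho1]
        exact card_eval_Ico _ (nvec ⟨0, h0t⟩) ((nvec ⟨0, h0t⟩) + (mvec ⟨1, h1t⟩)) _ _
          (fun x hx => by simp only [hQ1]; omega) (by omega) (by omega)
      · rw [blockCount_pad_low nvec mvec Q1 _ (by omega)]
        simp only [ho2]
        exact card_eval_Ico _ ((nvec ⟨0, h0t⟩) + (nvec ⟨1, h1t⟩)) ((nvec ⟨0, h0t⟩) + (nvec ⟨1, h1t⟩) + (mvec ⟨2, h2t⟩)) _ _
          (fun x hx => by simp only [hQ1]; omega) (by omega) (by omega)
    · exact blockCount_pad_high nvec mvec hT hmle Q1 hQ1b h h3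
  have cS2 : ∀ h : Fin t, blockCount nvec
      (Finset.univ.filter fun i => Q2 i.val ∨ Pad nvec mvec i.val) h = mvec h := by
    intro h
    rcases Nat.lt_or_ge h.val 3 with h3 | h3
    · rcases hcases h h3 with rfl | rfl | rfl
      · rw [blockCount_pad_low nvec mvec Q2 _ (by omega)]
        simp only [ho0]
        exact card_eval_pair _ 0 ((mvec ⟨0, h0t⟩) - 1) (mvec ⟨0, h0t⟩) _ _
          (fun x hx => by simp only [hQ2]; omega) (by omega) (by omega) (by omega) (by omega)
      · rw [blockCount_pad_low nvec mvec Q2 _ (by omega)]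
        simp only [ho1]
        exact card_eval_pair _ (nvec ⟨0, h0t⟩) ((nvec ⟨0, h0t⟩) + (mvec ⟨1, h1t⟩) - 1) ((nvec ⟨0, h0t⟩) + (mvec ⟨1, h1t⟩)) _ _
          (fun x hx => by simp only [hQ2]; omega) (by omega) (by omega) (by omega) (by omega)
      · rw [blockCount_pad_low nvec mvec Q2 _ (by omega)]
        simp only [ho2]
        exact card_eval_pair _ ((nvec ⟨0, h0t⟩) + (nvec ⟨1, h1t⟩)) ((nvec ⟨0, h0t⟩) + (nvec ⟨1, h1t⟩) + (mvec ⟨2, h2t⟩) - 1) ((nvec ⟨0, h0t⟩) + (nvec ⟨1, h1t⟩) + (mvec ⟨2, h2t⟩)) _ _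
          (fun x hx => by simp only [hQ2]; omega) (by omega) (by omega) (by omega) (by omega)
    · exact blockCount_pad_high nvec mvec hT hmle Q2 hQ2b h h3
  have cT1_0 : blockCount nvec
      (Finset.univ.filter fun i => Q3 i.val ∨ Pad nvec mvec i.val) ⟨0, h0t⟩ = (mvec ⟨0, h0t⟩) - 1 := by
    rw [blockCount_pad_low nvec mvec Q3 _ (show (0:ℕ) < 3 by omega)]
    simp only [ho0]
    exact card_eval_Ico _ 0 ((mvec ⟨0, h0t⟩) - 1) _ _
      (fun x hx => by simp only [hQ3]; omega) (by omega) (by omega)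
  have cT1_1 : blockCount nvec
      (Finset.univ.filter fun i => Q3 i.val ∨ Pad nvec mvec i.val) ⟨1, h1t⟩ = (mvec ⟨1, h1t⟩) + 1 := by
    rw [blockCount_pad_low nvec mvec Q3 _ (show (1:ℕ) < 3 by omega)]
    simp only [ho1]
    exact card_eval_Ico _ (nvec ⟨0, h0t⟩) ((nvec ⟨0, h0t⟩) + (mvec ⟨1, h1t⟩) + 1) _ _
      (fun x hx => by simp only [hQ3]; omega) (by omega) (by omega)
  have cT1_2 : blockCount nvec
      (Finset.univ.filter fun i => Q3 i.val ∨ Pad nvec mvec i.val) ⟨2, h2t⟩ = (mvec ⟨2, h2t⟩) + 1 := by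
    rw [blockCount_pad_low nvec mvec Q3 _ (show (2:ℕ) < 3 by omega)]
    simp only [ho2]
    exact card_eval_Ico _ ((nvec ⟨0, h0t⟩) + (nvec ⟨1, h1t⟩)) ((nvec ⟨0, h0t⟩) + (nvec ⟨1, h1t⟩) + (mvec ⟨2, h2t⟩) + 1) _ _
      (fun x hx => by simp only [hQ3]; omega) (by omega) (by omega)
  have cT2_0 : blockCount nvec
      (Finset.univ.filter fun i => Q4 i.val ∨ Pad nvec mvec i.val) ⟨0, h0t⟩ = (mvec ⟨0, h0t⟩) + 1 := by
    rw [blockCount_pad_low nvec mvec Q4 _ (show (0:ℕ) < 3 by omega)]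
    simp only [ho0]
    exact card_eval_Ico _ 0 ((mvec ⟨0, h0t⟩) + 1) _ _
      (fun x hx => by simp only [hQ4]; omega) (by omega) (by omega)
  have cT2_1 : blockCount nvec
      (Finset.univ.filter fun i => Q4 i.val ∨ Pad nvec mvec i.val) ⟨1, h1t⟩ = (mvec ⟨1, h1t⟩) - 1 := by
    rw [blockCount_pad_low nvec mvec Q4 _ (show (1:ℕ) < 3 by omega)]
    simp only [ho1]
    exact card_eval_Ico _ (nvec ⟨0, h0t⟩) ((nvec ⟨0, h0t⟩) + (mvec ⟨1, h1t⟩) - 1) _ _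
      (fun x hx => by simp only [hQ4]; omega) (by omega) (by omega)
  have cT2_2 : blockCount nvec
      (Finset.univ.filter fun i => Q4 i.val ∨ Pad nvec mvec i.val) ⟨2, h2t⟩ = (mvec ⟨2, h2t⟩) - 1 := by
    rw [blockCount_pad_low nvec mvec Q4 _ (show (2:ℕ) < 3 by omega)]
    simp only [ho2]
    exact card_eval_Ico _ ((nvec ⟨0, h0t⟩) + (nvec ⟨1, h1t⟩)) ((nvec ⟨0, h0t⟩) + (nvec ⟨1, h1t⟩) + (mvec ⟨2, h2t⟩) - 1) _ _
      (fun x hx => by simp only [hQ4]; omega) (by omega) (by omega)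
  -- winning and losing
  have winS1 : CGMinWinning nvec mvec
      (Finset.univ.filter fun i => Q1 i.val ∨ Pad nvec mvec i.val) := by
    intro k
    exact le_of_eq (Finset.sum_congr rfl (fun h _ => (cS1 h).symm))
  have winS2 : CGMinWinning nvec mvec
      (Finset.univ.filter fun i => Q2 i.val ∨ Pad nvec mvec i.val) := by
    intro k
    exact le_of_eq (Finset.sum_congr rfl (fun h _ => (cS2 h).symm))
  have losT1 : ¬ CGMinWinning nvec mvec
      (Finset.univ.filter fun i => Q3 i.val ∨ Pad nvec mvec i.val) := by
    intro hwin
    have := hwin ⟨0, h0t⟩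
    rw [Iic_fin_zero h0t, Finset.sum_singleton, Finset.sum_singleton, cT1_0] at this
    omega
  have losT2 : ¬ CGMinWinning nvec mvec
      (Finset.univ.filter fun i => Q4 i.val ∨ Pad nvec mvec i.val) := by
    intro hwin
    have := hwin ⟨2, h2t⟩
    rw [sum_Iic_two h0t h1t h2t, sum_Iic_two h0t h1t h2t] at this
    rw [cT2_0, cT2_1, cT2_2] at this
    omega
  have key : ∑ i ∈ (Finset.univ.filter fun i : Fin (∑ x, nvec x) =>
        Q1 i.val ∨ Pad nvec mvec i.val), w i
      + ∑ i ∈ (Finset.univ.filter fun i => Q2 i.val ∨ Pad nvec mvec i.val), w i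
      = ∑ i ∈ (Finset.univ.filter fun i => Q3 i.val ∨ Pad nvec mvec i.val), w i
      + ∑ i ∈ (Finset.univ.filter fun i => Q4 i.val ∨ Pad nvec mvec i.val), w i := by
    apply trade_sum
    · intro x
      have base : Q1 x.val ∨ Q2 x.val ↔ Q3 x.val ∨ Q4 x.val := by
        simp only [hQ1, hQ2, hQ3, hQ4]; omega
      exact or_pad_congr base
    · intro x
      have base : Q1 x.val ∧ Q2 x.val ↔ Q3 x.val ∧ Q4 x.val := by
        simp only [hQ1, hQ2, hQ3, hQ4]; omega
      exact and_pad_congr base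
  have w1 := (hiff _).1 winS1
  have w2 := (hiff _).1 winS2
  have l1 : ∑ i ∈ (Finset.univ.filter fun i : Fin (∑ x, nvec x) =>
      Q3 i.val ∨ Pad nvec mvec i.val), w i < q :=
    lt_of_not_ge (fun hc => losT1 ((hiff _).2 hc))
  have l2 : ∑ i ∈ (Finset.univ.filter fun i : Fin (∑ x, nvec x) =>
      Q4 i.val ∨ Pad nvec mvec i.val), w i < q :=
    lt_of_not_ge (fun hc => losT2 ((hiff _).2 hc))
  linarith


end CGM

theorem weighted_iff_t_eq_one_or_two (t : ℕ) (ht : 1 ≤ t) (nvec mvec : Fin t → ℕ)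
    (hn : ∀ h, 1 ≤ nvec h)
    (hm1 : 1 ≤ mvec ⟨0, ht⟩) (hm1' : mvec ⟨0, ht⟩ ≤ nvec ⟨0, ht⟩)
    (hmid : ∀ h : Fin t, 1 ≤ (h : ℕ) → (h : ℕ) ≤ t - 2 → 1 ≤ mvec h ∧ mvec h ≤ nvec h - 1)
    (hlast : 2 ≤ t → mvec ⟨t - 1, by omega⟩ ≤ nvec ⟨t - 1, by omega⟩ - 1)
    (hnontriv1 : mvec ⟨0, ht⟩ ≤ nvec ⟨0, ht⟩ - 1)
    (hnontriv2 : 2 ≤ t → 1 ≤ mvec ⟨t - 1, by omega⟩) :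
    IsWeightedGame (CGMinWinning nvec mvec) ↔
      t = 1 ∨ (t = 2 ∧ (mvec ⟨t - 1, by omega⟩ = 1 ∨
        mvec ⟨t - 1, by omega⟩ = nvec ⟨t - 1, by omega⟩ - 1)) := by
  constructor
  · intro hW
    rcases Nat.lt_or_ge t 3 with h3 | h3
    · interval_cases t
      · exact Or.inl rfl
      · right
        refine ⟨rfl, ?_⟩
        by_contra hcon
        push_neg at hcon
        obtain ⟨hne1, hne2⟩ := hcon
        have hb1 : 1 ≤ mvec 0 := hm1
        have ha : mvec 0 ≤ nvec 0 - 1 := hnontriv1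
        have hbn : 1 ≤ nvec 0 := hn 0
        have hb2 : mvec 0 + 1 ≤ nvec 0 := by omega
        have hz : 1 ≤ mvec 1 := hnontriv2 (le_refl 2)
        have hne1' : mvec 1 ≠ 1 := hne1
        have hb3 : 2 ≤ mvec 1 := by omega
        have hl : mvec 1 ≤ nvec 1 - 1 := hlast (le_refl 2)
        have hne2' : mvec 1 ≠ nvec 1 - 1 := hne2
        have hbn1 : 1 ≤ nvec 1 := hn 1
        have hb4 : mvec 1 + 2 ≤ nvec 1 := by omega
        exact absurd hW (CGM.not_weighted_t2 nvec mvec hb1 hb2 hb3 hb4)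
    · exfalso
      have h0t : 0 < t := by omega
      have h1t : 1 < t := by omega
      have h2t : 2 < t := by omega
      have hmle : ∀ h, mvec h ≤ nvec h := by
        intro h
        rcases h with ⟨v, hv⟩
        by_cases hv0 : v = 0
        · subst hv0
          exact hm1'
        · by_cases hvl : v = t - 1
          · subst hvl
            have ha : mvec ⟨t - 1, hv⟩ ≤ nvec ⟨t - 1, hv⟩ - 1 := hlast (by omega)
            have hb : 1 ≤ nvec ⟨t - 1, hv⟩ := hn _
            omega
          · have ha := (hmid ⟨v, hv⟩ (show 1 ≤ v by omega) (show v ≤ t - 2 by omega)).2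
            have hb : 1 ≤ nvec ⟨v, hv⟩ := hn _
            omega
      have hb0 : 1 ≤ mvec ⟨0, h0t⟩ := hm1
      have ha0 : mvec ⟨0, h0t⟩ ≤ nvec ⟨0, h0t⟩ - 1 := hnontriv1
      have hbn0 : 1 ≤ nvec ⟨0, h0t⟩ := hn _
      have hb0' : mvec ⟨0, h0t⟩ + 1 ≤ nvec ⟨0, h0t⟩ := by omega
      have hmid1 := hmid ⟨1, h1t⟩ (show 1 ≤ 1 by omega) (show 1 ≤ t - 2 by omega)
      have hbn1 : 1 ≤ nvec ⟨1, h1t⟩ := hn _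
      have hb1 : 1 ≤ mvec ⟨1, h1t⟩ := hmid1.1
      have hb1' : mvec ⟨1, h1t⟩ + 1 ≤ nvec ⟨1, h1t⟩ := by
        have := hmid1.2
        omega
      have hbn2 : 1 ≤ nvec ⟨2, h2t⟩ := hn _
      have hb2 : 1 ≤ mvec ⟨2, h2t⟩ := by
        by_cases ht3 : t = 3
        · subst ht3
          exact hnontriv2 (by omega)
        · exact (hmid ⟨2, h2t⟩ (show 1 ≤ 2 by omega) (show 2 ≤ t - 2 by omega)).1
      have hb2' : mvec ⟨2, h2t⟩ + 1 ≤ nvec ⟨2, h2t⟩ := by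
        by_cases ht3 : t = 3
        · subst ht3
          have := hlast (by omega)
          have h' : mvec ⟨2, h2t⟩ ≤ nvec ⟨2, h2t⟩ - 1 := this
          omega
        · have := (hmid ⟨2, h2t⟩ (show 1 ≤ 2 by omega) (show 2 ≤ t - 2 by omega)).2
          omega
      exact absurd hW (CGM.not_weighted_t3 nvec mvec h3 hmle hb0 hb0' hb1 hb1' hb2 hb2')
  · rintro (rfl | ⟨rfl, hc⟩)
    · exact CGM.weighted_t1 nvec mvec hm1
    · have hc0 : 1 ≤ mvec 0 := hm1
      have ha : mvec 0 ≤ nvec 0 - 1 := hnontriv1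
      have hbn : 1 ≤ nvec 0 := hn 0
      have hm0' : mvec 0 + 1 ≤ nvec 0 := by omega
      have hm1pos : 1 ≤ mvec 1 := hnontriv2 (le_refl 2)
      have hbn1 : 1 ≤ nvec 1 := hn 1
      rcases hc with hc | hc
      · have hc' : mvec 1 = 1 := hc
        exact CGM.weighted_t2_a nvec mvec hc0 hm0' hc'
      · have hc' : mvec 1 = nvec 1 - 1 := hc
        have heq : mvec 1 + 1 = nvec 1 := by omega
        exact CGM.weighted_t2_b nvec mvec hc0 hm0' heq hm1pos
end

section
/- For every integer n ≥ 3, the number of tuples (n₁, n₂, m₁, m₂) of integers with n₁, n₂ ≥ 1, n₁ + n₂ = n, 1 ≤ m₁ ≤ n₁ − 1, 1 ≤ m₂ ≤ n₂ − 1 (non-trivial bipartite invariants) such that the complete game with minimum (m₁, m₂) is weighted, equals n² − 6n + 9 = (n−3)²; for n ≤ 2 this number is 0. -/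
open Finset

/-- Winning predicate of the bipartite complete game with minimum `(a,b)` on the player set
`Fin (n₁ + n₂)`, where the players `i < n₁` form block 1 and the remaining ones block 2:
a coalition is winning iff `|S ∩ N₁| ≥ a` and `|S ∩ N₁| + |S ∩ N₂| = |S| ≥ a + b`. -/
def BipWinning (n1 n2 a b : ℕ) (S : Finset (Fin (n1 + n2))) : Prop :=
  a ≤ (S.filter fun i : Fin (n1 + n2) => (i : ℕ) < n1).card ∧ a + b ≤ S.card


lemma card_fin_filter (m : ℕ) (P : ℕ → Prop) [DecidablePred P] :
    (univ.filter (fun i : Fin m => P i.val)).card = ((range m).filter P).card := by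
  apply Finset.card_bij (fun i _ => i.val)
  · intro a ha
    simp only [mem_filter, mem_range] at ha ⊢
    exact ⟨a.isLt, ha.2⟩
  · intro a _ b _ h; exact Fin.val_injective h
  · intro x hx
    simp only [mem_filter, mem_range] at hx
    exact ⟨⟨x, hx.1⟩, by simp [hx.2], rfl⟩

lemma sum_split (n1 n2 c1 c2 : ℕ) (S : Finset (Fin (n1 + n2))) :
    ∑ i ∈ S, (if (i : ℕ) < n1 then (c1 : ℝ) else (c2 : ℝ)) =
      ((c1 * (S.filter fun i : Fin (n1 + n2) => (i : ℕ) < n1).card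
        + c2 * (S.filter fun i : Fin (n1 + n2) => ¬ (i : ℕ) < n1).card : ℕ) : ℝ) := by
  rw [← Finset.sum_filter_add_sum_filter_not S (fun i => (i : ℕ) < n1)]
  push_cast
  congr 1
  · rw [Finset.sum_congr rfl (fun i hi => if_pos (Finset.mem_filter.mp hi).2),
      Finset.sum_const, nsmul_eq_mul, mul_comm]
  · rw [Finset.sum_congr rfl (fun i hi => if_neg (Finset.mem_filter.mp hi).2),
      Finset.sum_const, nsmul_eq_mul, mul_comm]

lemma s2_le (n1 n2 : ℕ) (S : Finset (Fin (n1 + n2))) :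
    (S.filter fun i : Fin (n1 + n2) => ¬ (i : ℕ) < n1).card ≤ n2 := by
  calc (S.filter fun i : Fin (n1 + n2) => ¬ (i : ℕ) < n1).card
      ≤ (univ.filter fun i : Fin (n1 + n2) => ¬ (i : ℕ) < n1).card :=
        card_le_card (filter_subset_filter _ (subset_univ S))
    _ = ((range (n1 + n2)).filter fun x => ¬ x < n1).card := card_fin_filter (n1+n2) (fun x => ¬ x < n1)
    _ = (Ico n1 (n1 + n2)).card := by
        congr 1; ext x; simp only [mem_filter, mem_range, mem_Ico]; omega
    _ = n2 := by rw [Nat.card_Ico]; omega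

lemma s1_le (n1 n2 : ℕ) (S : Finset (Fin (n1 + n2))) :
    (S.filter fun i : Fin (n1 + n2) => (i : ℕ) < n1).card ≤ n1 := by
  calc (S.filter fun i : Fin (n1 + n2) => (i : ℕ) < n1).card
      ≤ (univ.filter fun i : Fin (n1 + n2) => (i : ℕ) < n1).card :=
        card_le_card (filter_subset_filter _ (subset_univ S))
    _ = ((range (n1 + n2)).filter fun x => x < n1).card := card_fin_filter (n1+n2) (fun x => x < n1)
    _ = (range n1).card := by
        congr 1; ext x; simp only [mem_filter, mem_range]; omega
    _ = n1 := card_range n1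

lemma weighted_b1 {n1 n2 a : ℕ} (ha1 : 1 ≤ a) (ha2 : a + 1 ≤ n1) (hn2 : 2 ≤ n2) :
    IsWeightedGame (BipWinning n1 n2 a 1) := by
  refine ⟨fun i => if (i : ℕ) < n1 then ((n2 : ℕ) : ℝ) else ((1 : ℕ) : ℝ),
    ((a * n2 + 1 : ℕ) : ℝ), fun i => ?_, ?_, ?_⟩
  · show (0:ℝ) ≤ if (i : ℕ) < n1 then _ else _; split <;> positivity
  · exact_mod_cast Nat.succ_pos _
  · intro S
    rw [sum_split n1 n2 n2 1 S, Nat.cast_le]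
    set s1 := (S.filter fun i : Fin (n1 + n2) => (i : ℕ) < n1).card with hs1
    set s2 := (S.filter fun i : Fin (n1 + n2) => ¬ (i : ℕ) < n1).card with hs2
    have h12 : s1 + s2 = S.card := card_filter_add_card_filter_not _
    have h2 : s2 ≤ n2 := s2_le n1 n2 S
    unfold BipWinning
    rw [← h12, ← hs1]
    constructor
    · rintro ⟨hA, hB⟩
      rcases Nat.lt_or_ge a s1 with h | h
      · have key : a * n2 + n2 ≤ n2 * s1 := by
          calc a * n2 + n2 = n2 * (a + 1) := by ring
            _ ≤ n2 * s1 := Nat.mul_le_mul_left _ (by omega)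
        have : (0:ℕ) ≤ s2 := Nat.zero_le _
        nlinarith
      · have hs1a : s1 = a := le_antisymm h hA
        have : 1 ≤ s2 := by omega
        nlinarith [hs1a]
    · intro h
      have hA : a ≤ s1 := by
        by_contra hc
        have : n2 * (s1 + 1) ≤ n2 * a := Nat.mul_le_mul_left _ (by omega)
        nlinarith
      refine ⟨hA, ?_⟩
      by_contra hc
      have hs1a : s1 = a := by omega
      have hs20 : s2 = 0 := by omega
      rw [hs1a, hs20] at h
      nlinarith

lemma weighted_btop {n1 n2 a b : ℕ} (ha1 : 1 ≤ a) (ha2 : a + 1 ≤ n1) (hb : b + 1 = n2) :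
    IsWeightedGame (BipWinning n1 n2 a b) := by
  refine ⟨fun i => if (i : ℕ) < n1 then (((n1 + n2 + 1 : ℕ)) : ℝ) else (((n1 + n2 : ℕ)) : ℝ),
    (((a + b) * (n1 + n2) + a : ℕ) : ℝ), fun i => ?_, ?_, ?_⟩
  · show (0:ℝ) ≤ if (i : ℕ) < n1 then _ else _; split <;> positivity
  · have : 0 < (a + b) * (n1 + n2) + a := by positivity
    exact_mod_cast this
  · intro S
    rw [sum_split n1 n2 (n1 + n2 + 1) (n1 + n2) S, Nat.cast_le]
    set s1 := (S.filter fun i : Fin (n1 + n2) => (i : ℕ) < n1).card with hs1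
    set s2 := (S.filter fun i : Fin (n1 + n2) => ¬ (i : ℕ) < n1).card with hs2
    have h12 : s1 + s2 = S.card := card_filter_add_card_filter_not _
    have h2 : s2 ≤ n2 := s2_le n1 n2 S
    have h1 : s1 ≤ n1 := s1_le n1 n2 S
    unfold BipWinning
    rw [← h12, ← hs1]
    constructor
    · rintro ⟨hA, hB⟩
      have key : (n1 + n2) * (a + b) ≤ (n1 + n2) * (s1 + s2) :=
        Nat.mul_le_mul_left _ hB
      nlinarith
    · intro h
      have hB : a + b ≤ s1 + s2 := by
        by_contra hc
        have key : (n1 + n2) * (s1 + s2 + 1) ≤ (n1 + n2) * (a + b) :=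
          Nat.mul_le_mul_left _ (by omega)
        nlinarith
      refine ⟨?_, hB⟩
      by_contra hc
      have heq : s1 + s2 = a + b := by omega
      have e : (n1 + n2) * (s1 + s2) = (n1 + n2) * (a + b) := by rw [heq]
      nlinarith

lemma not_weighted {n1 n2 a b : ℕ} (ha1 : 1 ≤ a) (ha2 : a + 1 ≤ n1)
    (hb1 : 2 ≤ b) (hb2 : b + 2 ≤ n2) :
    ¬ IsWeightedGame (BipWinning n1 n2 a b) := by
  rintro ⟨w, q, hw, hq, hiff⟩
  set M := min (a + b - 1) n1 with hMdef
  set r := a + b - 1 - n1 with hrdef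
  have hM1 : a + 1 ≤ M := by omega
  have hM2 : M ≤ n1 := by omega
  have hM3 : M + r = a + b - 1 := by omega
  have hM4 : M = n1 ∨ r = 0 := by omega
  have hr2 : r + 2 ≤ n2 := by omega
  set X : Finset (Fin (n1 + n2)) :=
    univ.filter (fun i => (i : ℕ) < a - 1 ∨ n1 ≤ (i : ℕ)) with hX
  set Y : Finset (Fin (n1 + n2)) :=
    univ.filter (fun i => (i : ℕ) < a + b - 1) with hY
  set W1 : Finset (Fin (n1 + n2)) :=
    univ.filter (fun i => (i : ℕ) < a ∨ (n1 ≤ (i : ℕ) ∧ (i : ℕ) < n1 + (n2 - 2))) with hW1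
  set W2 : Finset (Fin (n1 + n2)) :=
    univ.filter (fun i => (i : ℕ) < a - 1 ∨ (a ≤ (i : ℕ) ∧ (i : ℕ) < M) ∨
      (n1 ≤ (i : ℕ) ∧ (i : ℕ) < n1 + r) ∨ n1 + (n2 - 2) ≤ (i : ℕ)) with hW2
  -- W1 is winning
  have winW1 : BipWinning n1 n2 a b W1 := by
    constructor
    · rw [hW1, filter_filter,
        card_fin_filter (n1 + n2) (fun x => (x < a ∨ (n1 ≤ x ∧ x < n1 + (n2 - 2))) ∧ x < n1)]
      have : (range (n1 + n2)).filter
          (fun x => (x < a ∨ (n1 ≤ x ∧ x < n1 + (n2 - 2))) ∧ x < n1) = range a := by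
        ext x; simp only [mem_filter, mem_range]; omega
      rw [this, card_range]
    · rw [hW1, show (univ.filter (fun i : Fin (n1+n2) =>
          (i : ℕ) < a ∨ (n1 ≤ (i : ℕ) ∧ (i : ℕ) < n1 + (n2 - 2)))).card
          = ((range (n1 + n2)).filter
            (fun x => x < a ∨ (n1 ≤ x ∧ x < n1 + (n2 - 2)))).card from
          card_fin_filter (n1 + n2) (fun x => x < a ∨ (n1 ≤ x ∧ x < n1 + (n2 - 2)))]
      have he : (range (n1 + n2)).filter (fun x => x < a ∨ (n1 ≤ x ∧ x < n1 + (n2 - 2)))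
          = range a ∪ Ico n1 (n1 + (n2 - 2)) := by
        ext x; simp only [mem_filter, mem_range, mem_union, mem_Ico]; omega
      rw [he, card_union_of_disjoint (by
        rw [Finset.disjoint_left]; intro x hx hy
        simp only [mem_range] at hx; simp only [mem_Ico] at hy; omega)]
      rw [card_range, Nat.card_Ico]; omega
  -- W2 is winning
  have winW2 : BipWinning n1 n2 a b W2 := by
    constructor
    · rw [hW2, filter_filter,
        card_fin_filter (n1 + n2) (fun x => (x < a - 1 ∨ (a ≤ x ∧ x < M) ∨
          (n1 ≤ x ∧ x < n1 + r) ∨ n1 + (n2 - 2) ≤ x) ∧ x < n1)]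
      have he : (range (n1 + n2)).filter (fun x => (x < a - 1 ∨ (a ≤ x ∧ x < M) ∨
          (n1 ≤ x ∧ x < n1 + r) ∨ n1 + (n2 - 2) ≤ x) ∧ x < n1)
          = range (a - 1) ∪ Ico a M := by
        ext x; simp only [mem_filter, mem_range, mem_union, mem_Ico]; omega
      rw [he, card_union_of_disjoint (by
        rw [Finset.disjoint_left]; intro x hx hy
        simp only [mem_range] at hx; simp only [mem_Ico] at hy; omega)]
      rw [card_range, Nat.card_Ico]; omega
    · rw [hW2, show (univ.filter (fun i : Fin (n1+n2) =>
          (i : ℕ) < a - 1 ∨ (a ≤ (i : ℕ) ∧ (i : ℕ) < M) ∨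
          (n1 ≤ (i : ℕ) ∧ (i : ℕ) < n1 + r) ∨ n1 + (n2 - 2) ≤ (i : ℕ))).card
          = ((range (n1 + n2)).filter (fun x => x < a - 1 ∨ (a ≤ x ∧ x < M) ∨
            (n1 ≤ x ∧ x < n1 + r) ∨ n1 + (n2 - 2) ≤ x)).card from
          card_fin_filter (n1 + n2) (fun x => x < a - 1 ∨ (a ≤ x ∧ x < M) ∨
            (n1 ≤ x ∧ x < n1 + r) ∨ n1 + (n2 - 2) ≤ x)]
      have he : (range (n1 + n2)).filter (fun x => x < a - 1 ∨ (a ≤ x ∧ x < M) ∨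
          (n1 ≤ x ∧ x < n1 + r) ∨ n1 + (n2 - 2) ≤ x)
          = ((range (a - 1) ∪ Ico a M) ∪ Ico n1 (n1 + r)) ∪ Ico (n1 + (n2 - 2)) (n1 + n2) := by
        ext x; simp only [mem_filter, mem_range, mem_union, mem_Ico]; omega
      rw [he]
      rw [card_union_of_disjoint (by
        rw [Finset.disjoint_left]; intro x hx hy
        simp only [mem_union, mem_range, mem_Ico] at hx hy; omega)]
      rw [card_union_of_disjoint (by
        rw [Finset.disjoint_left]; intro x hx hy
        simp only [mem_union, mem_range, mem_Ico] at hx hy; omega)]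
      rw [card_union_of_disjoint (by
        rw [Finset.disjoint_left]; intro x hx hy
        simp only [mem_range, mem_Ico] at hx hy; omega)]
      rw [card_range, Nat.card_Ico, Nat.card_Ico, Nat.card_Ico]; omega
  -- X is losing
  have loseX : ¬ BipWinning n1 n2 a b X := by
    intro hwin
    have h1 := hwin.1
    rw [hX, filter_filter,
      card_fin_filter (n1 + n2) (fun x => (x < a - 1 ∨ n1 ≤ x) ∧ x < n1)] at h1
    have he : (range (n1 + n2)).filter (fun x => (x < a - 1 ∨ n1 ≤ x) ∧ x < n1)
        = range (a - 1) := by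
      ext x; simp only [mem_filter, mem_range]; omega
    rw [he, card_range] at h1; omega
  -- Y is losing
  have loseY : ¬ BipWinning n1 n2 a b Y := by
    intro hwin
    have h1 := hwin.2
    rw [hY, show (univ.filter (fun i : Fin (n1+n2) => (i : ℕ) < a + b - 1)).card
        = ((range (n1 + n2)).filter (fun x => x < a + b - 1)).card from
        card_fin_filter (n1 + n2) (fun x => x < a + b - 1)] at h1
    have he : (range (n1 + n2)).filter (fun x => x < a + b - 1) = range (a + b - 1) := by
      ext x; simp only [mem_filter, mem_range]; omega
    rw [he, card_range] at h1; omega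
  -- set identities
  have hunion : W1 ∪ W2 = X ∪ Y := by
    ext i
    simp only [hW1, hW2, hX, hY, mem_union, mem_filter, mem_univ, true_and]
    have := i.isLt
    omega
  have hinter : W1 ∩ W2 = X ∩ Y := by
    ext i
    simp only [hW1, hW2, hX, hY, mem_inter, mem_filter, mem_univ, true_and]
    have := i.isLt
    omega
  -- the contradiction
  have e1 : ∑ i ∈ W1, w i + ∑ i ∈ W2, w i = ∑ i ∈ X, w i + ∑ i ∈ Y, w i := by
    rw [← Finset.sum_union_inter, hunion, hinter, Finset.sum_union_inter]
  have q1 : q ≤ ∑ i ∈ W1, w i := (hiff W1).mp winW1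
  have q2 : q ≤ ∑ i ∈ W2, w i := (hiff W2).mp winW2
  have q3 : ∑ i ∈ X, w i < q := lt_of_not_ge (fun h => loseX ((hiff X).mpr h))
  have q4 : ∑ i ∈ Y, w i < q := lt_of_not_ge (fun h => loseY ((hiff Y).mpr h))
  linarith


/-- The number of non-trivial bipartite invariants `(n₁, n₂, m₁, m₂)` with `n₁ + n₂ = n`,
`1 ≤ m₁ ≤ n₁ - 1`, `1 ≤ m₂ ≤ n₂ - 1` whose complete game with minimum `(m₁, m₂)` is weighted. -/
noncomputable def ntWeightedBipCount (n : ℕ) : ℕ :=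
  {p : ℕ × ℕ × ℕ × ℕ |
      1 ≤ p.1 ∧ 1 ≤ p.2.1 ∧ p.1 + p.2.1 = n ∧
      1 ≤ p.2.2.1 ∧ p.2.2.1 ≤ p.1 - 1 ∧
      1 ≤ p.2.2.2 ∧ p.2.2.2 ≤ p.2.1 - 1 ∧
      IsWeightedGame (BipWinning p.1 p.2.1 p.2.2.1 p.2.2.2)}.ncard

theorem count_nontrivial_weighted_bipartite_min (n : ℕ) :
    (3 ≤ n → (ntWeightedBipCount n : ℤ) = (n : ℤ) ^ 2 - 6 * n + 9) ∧
    (n ≤ 2 → ntWeightedBipCount n = 0) := by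
  constructor
  · intro hn
    set g : ℕ × ℕ → ℕ × ℕ × ℕ × ℕ := fun p =>
      if p.1 ≤ p.2 then (p.2 + 1, n - (p.2 + 1), p.1, 1)
      else (p.1, n - p.1, p.2, n - p.1 - 1) with hg
    have hgval : ∀ x y : ℕ, g (x, y) =
        if x ≤ y then (y + 1, n - (y + 1), x, 1)
        else (x, n - x, y, n - x - 1) := fun x y => rfl
    have hset : {p : ℕ × ℕ × ℕ × ℕ |
        1 ≤ p.1 ∧ 1 ≤ p.2.1 ∧ p.1 + p.2.1 = n ∧
        1 ≤ p.2.2.1 ∧ p.2.2.1 ≤ p.1 - 1 ∧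
        1 ≤ p.2.2.2 ∧ p.2.2.2 ≤ p.2.1 - 1 ∧
        IsWeightedGame (BipWinning p.1 p.2.1 p.2.2.1 p.2.2.2)}
        = ↑(((Icc 1 (n - 3)) ×ˢ (Icc 1 (n - 3))).image g) := by
      ext p
      obtain ⟨n1, n2, a, b⟩ := p
      simp only [Set.mem_setOf_eq, coe_image, Set.mem_image, mem_coe, mem_product, mem_Icc]
      constructor
      · rintro ⟨h1, h2, h3, h4, h5, h6, h7, h8⟩
        have hn1 : 2 ≤ n1 := by omega
        have hn2 : 2 ≤ n2 := by omega
        have ha : a + 1 ≤ n1 := by omega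
        have hbu : b + 1 ≤ n2 := by omega
        have hbval : b = 1 ∨ (2 ≤ b ∧ b + 1 = n2) := by
          by_contra hcon
          push_neg at hcon
          have h9 : ¬ (2 ≤ b ∧ b + 2 ≤ n2) := fun hc =>
            not_weighted h4 ha hc.1 hc.2 h8
          omega
        rcases hbval with hb | ⟨hb2, hb⟩
        · refine ⟨(a, n1 - 1), ?_, ?_⟩
          · refine ⟨⟨?_, ?_⟩, ?_, ?_⟩ <;> dsimp only <;> omega
          · rw [hgval, if_pos (by omega)]
            have e1 : n1 - 1 + 1 = n1 := by omega
            rw [e1, show n - n1 = n2 from by omega, hb]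
        · refine ⟨(n1, a), ?_, ?_⟩
          · refine ⟨⟨?_, ?_⟩, ?_, ?_⟩ <;> dsimp only <;> omega
          · rw [hgval, if_neg (by omega)]
            rw [show n - n1 - 1 = b from by omega, show n - n1 = n2 from by omega]
      · rintro ⟨⟨x, y⟩, ⟨⟨hx1, hx2⟩, hy1, hy2⟩, hgp⟩
        rw [hgval] at hgp
        by_cases hxy : x ≤ y
        · rw [if_pos hxy] at hgp
          simp only [Prod.mk.injEq] at hgp
          obtain ⟨e1, e2, e3, e4⟩ := hgp
          subst e1 e2 e3 e4
          refine ⟨by omega, by omega, by omega, by omega, by omega, by omega, by omega, ?_⟩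
          exact weighted_b1 hx1 (by omega) (by omega)
        · rw [if_neg hxy] at hgp
          simp only [Prod.mk.injEq] at hgp
          obtain ⟨e1, e2, e3, e4⟩ := hgp
          subst e1 e2 e3 e4
          refine ⟨by omega, by omega, by omega, by omega, by omega, by omega, by omega, ?_⟩
          exact weighted_btop hy1 (by omega) (by omega)
    rw [ntWeightedBipCount, hset, Set.ncard_coe_finset]
    have hinj : Set.InjOn g ((Icc 1 (n - 3)) ×ˢ (Icc 1 (n - 3)) : Finset (ℕ × ℕ)) := by
      have hkey : ∀ x y : ℕ, 1 ≤ x → x ≤ n - 3 →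
          (if (g (x, y)).2.2.2 = 1 then ((g (x, y)).2.2.1, (g (x, y)).1 - 1)
            else ((g (x, y)).1, (g (x, y)).2.2.1)) = (x, y) := by
        intro x y hx1 hx2
        rw [hgval]
        by_cases hxy : x ≤ y
        · rw [if_pos hxy]
          dsimp only
          rw [if_pos rfl]
          rfl
        · rw [if_neg hxy]
          dsimp only
          rw [if_neg (show ¬ (n - x - 1 = 1) from by omega)]
      rintro ⟨x1, y1⟩ hp ⟨x2, y2⟩ hq heq
      simp only [mem_coe, mem_product, mem_Icc] at hp hq
      have := hkey x1 y1 hp.1.1 hp.1.2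
      rw [heq, hkey x2 y2 hq.1.1 hq.1.2] at this
      exact this.symm
    rw [card_image_of_injOn hinj, card_product, Nat.card_Icc]
    have h3 : ((n - 3 + 1 - 1 : ℕ) : ℤ) = (n : ℤ) - 3 := by omega
    rw [Nat.cast_mul, h3]
    ring
  · intro hn
    have hset : {p : ℕ × ℕ × ℕ × ℕ |
        1 ≤ p.1 ∧ 1 ≤ p.2.1 ∧ p.1 + p.2.1 = n ∧
        1 ≤ p.2.2.1 ∧ p.2.2.1 ≤ p.1 - 1 ∧
        1 ≤ p.2.2.2 ∧ p.2.2.2 ≤ p.2.1 - 1 ∧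
        IsWeightedGame (BipWinning p.1 p.2.1 p.2.2.1 p.2.2.2)} = ∅ := by
      rw [Set.eq_empty_iff_forall_notMem]
      rintro p ⟨h1, h2, h3, h4, h5, h6, h7, _⟩
      omega
    rw [ntWeightedBipCount, hset, Set.ncard_empty]
end

section
/- For every integer n ≥ 3, the number of tuples (n₁, n₂, m₁, m₂) of integers with n₁, n₂ ≥ 1, n₁ + n₂ = n, 1 ≤ m₁ ≤ n₁, 0 ≤ m₂ ≤ n₂ − 1 such that the complete game with minimum (m₁, m₂) is weighted, equals 2(n−2)² + 2; for n ≤ 2 this number equals n − 1. -/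
open Finset

/-- The number of bipartite invariants `(n₁, n₂, m₁, m₂)` with `n₁ + n₂ = n`,
`1 ≤ m₁ ≤ n₁`, `0 ≤ m₂ ≤ n₂ - 1` whose complete game with minimum `(m₁, m₂)` is weighted;
equivalently, the number of weighted games with `n` players, two equivalence classes of
players and one shift-minimal winning vector. -/
noncomputable def weightedBipCount (n : ℕ) : ℕ :=
  {p : ℕ × ℕ × ℕ × ℕ |
      1 ≤ p.1 ∧ 1 ≤ p.2.1 ∧ p.1 + p.2.1 = n ∧
      1 ≤ p.2.2.1 ∧ p.2.2.1 ≤ p.1 ∧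
      p.2.2.2 ≤ p.2.1 - 1 ∧
      IsWeightedGame (BipWinning p.1 p.2.1 p.2.2.1 p.2.2.2)}.ncard

lemma card_univ_filter_val {n : ℕ} (P : ℕ → Prop) [DecidablePred P] :
    ((univ : Finset (Fin n)).filter fun i => P i.val).card = ((range n).filter P).card := by
  rw [← Finset.card_image_of_injective _ Fin.val_injective]
  congr 1
  ext x
  simp only [Finset.mem_image, Finset.mem_filter, Finset.mem_univ, true_and, Finset.mem_range]
  constructor
  · rintro ⟨i, h, rfl⟩; exact ⟨i.isLt, h⟩
  · rintro ⟨hx, h⟩; exact ⟨⟨x, hx⟩, h, rfl⟩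

lemma sum_two_weights {n : ℕ} (n1 c1 c2 : ℕ) (S : Finset (Fin n)) :
    ∑ i ∈ S, (if (i : ℕ) < n1 then (c1 : ℝ) else (c2 : ℝ)) =
      (c1 : ℝ) * (S.filter fun i : Fin n => (i : ℕ) < n1).card
        + (c2 : ℝ) * (S.filter fun i : Fin n => ¬ (i : ℕ) < n1).card := by
  rw [Finset.sum_ite, Finset.sum_const, Finset.sum_const]
  simp [nsmul_eq_mul]
  ring

lemma x_le {n1 n2 : ℕ} (S : Finset (Fin (n1 + n2))) :
    (S.filter fun i : Fin (n1+n2) => (i : ℕ) < n1).card ≤ n1 := by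
  calc (S.filter fun i : Fin (n1+n2) => (i : ℕ) < n1).card
      ≤ ((univ : Finset (Fin (n1+n2))).filter fun i : Fin (n1+n2) => (i:ℕ) < n1).card :=
        Finset.card_le_card (Finset.filter_subset_filter _ (Finset.subset_univ S))
    _ = ((range (n1+n2)).filter fun v => v < n1).card := card_univ_filter_val (fun v => v < n1)
    _ ≤ n1 := by
        have : ((range (n1+n2)).filter fun v => v < n1) = range n1 := by
          ext v; simp; omega
        rw [this, Finset.card_range]

lemma y_le {n1 n2 : ℕ} (S : Finset (Fin (n1 + n2))) :
    (S.filter fun i : Fin (n1+n2) => ¬ (i : ℕ) < n1).card ≤ n2 := by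
  calc (S.filter fun i : Fin (n1+n2) => ¬ (i : ℕ) < n1).card
      ≤ ((univ : Finset (Fin (n1+n2))).filter fun i : Fin (n1+n2) => ¬ (i:ℕ) < n1).card :=
        Finset.card_le_card (Finset.filter_subset_filter _ (Finset.subset_univ S))
    _ = ((range (n1+n2)).filter fun v => ¬ v < n1).card := card_univ_filter_val (fun v => ¬ v < n1)
    _ ≤ n2 := by
        have : ((range (n1+n2)).filter fun v => ¬ v < n1) = Ico n1 (n1+n2) := by
          ext v; simp; omega
        rw [this, Nat.card_Ico]; omega

lemma weighted_of (n1 n2 a b : ℕ) (h1 : 1 ≤ n1) (h2 : 1 ≤ n2) (ha : 1 ≤ a) (ha2 : a ≤ n1)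
    (hb : b < n2) (hcond : b = 0 ∨ b = 1 ∨ a = n1 ∨ b = n2 - 1) :
    IsWeightedGame (BipWinning n1 n2 a b) := by
  -- choose integer weights c1 ≥ c2 and quota Q = c1*a + c2*b
  obtain ⟨c1, c2, hQpos, hiff⟩ :
      ∃ c1 c2 : ℕ, 0 < c1 * a + c2 * b ∧
        ∀ x y : ℕ, x ≤ n1 → y ≤ n2 →
          ((a ≤ x ∧ a + b ≤ x + y) ↔ c1 * a + c2 * b ≤ c1 * x + c2 * y) := by
    rcases eq_or_ne b 0 with hb0 | hb0
    · -- b = 0 : weights (1,0)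
      subst hb0
      refine ⟨1, 0, by omega, fun x y hx hy => by omega⟩
    · have hb1 : 1 ≤ b := Nat.one_le_iff_ne_zero.2 hb0
      rcases eq_or_ne a n1 with han | han
      · -- a = n1 : weights (n2, 1), quota n1*n2 + b
        subst han
        refine ⟨n2, 1, by nlinarith, fun x y hx hy => ?_⟩
        constructor
        · rintro ⟨hax, haxy⟩
          have hxe : x = a := le_antisymm hx hax
          subst hxe
          omega
        · intro hw
          have hax : a ≤ x := by
            by_contra hc
            push_neg at hc
            have : n2 * x + 1 * y ≤ n2 * (x+1) := by rw [Nat.mul_succ]; omega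
            have h2' : n2 * (x+1) ≤ n2 * a := Nat.mul_le_mul_left _ hc
            have : n2 * a + 1 * b ≤ n2 * a := le_trans hw (le_trans this h2')
            omega
          have hxe : x = a := le_antisymm hx hax
          subst hxe
          omega
      · rcases eq_or_ne b 1 with hb1' | hb1'
        · -- b = 1 : weights (n2, 1), quota a*n2 + 1
          subst hb1'
          have hn2 : 2 ≤ n2 := hb
          refine ⟨n2, 1, by nlinarith, fun x y hx hy => ?_⟩
          constructor
          · rintro ⟨hax, haxy⟩
            rcases eq_or_lt_of_le hax with h | h
            · subst h; omega
            · have : n2 * (a+1) ≤ n2 * x := Nat.mul_le_mul_left _ h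
              nlinarith
          · intro hw
            have hax : a ≤ x := by
              by_contra hc
              push_neg at hc
              have h2' : n2 * (x+1) ≤ n2 * a := Nat.mul_le_mul_left _ hc
              rw [Nat.mul_succ] at h2'
              omega
            refine ⟨hax, ?_⟩
            by_contra hc
            push_neg at hc
            have hxa : x = a := by omega
            have hy0 : y = 0 := by omega
            subst hxa; subst hy0
            omega
        · -- remaining case : b = n2 - 1, 2 ≤ b, a < n1
          have hbn : b = n2 - 1 := by tauto
          have hb2 : 2 ≤ b := by omega
          have han' : a < n1 := lt_of_le_of_ne ha2 han
          set d := min (n1 - a) (b - 1) with hd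
          have hd1 : 1 ≤ d := by omega
          refine ⟨2*d+1, 2*d, by positivity, fun x y hx hy => ?_⟩
          have hyb : y ≤ b + 1 := by omega
          constructor
          · rintro ⟨hax, haxy⟩
            have : 2*d*(a+b) ≤ 2*d*(x+y) := Nat.mul_le_mul_left _ haxy
            nlinarith
          · intro hw
            have hax : a ≤ x := by
              by_contra hc
              push_neg at hc
              have h2' : (2*d+1) * (x+1) ≤ (2*d+1) * a := Nat.mul_le_mul_left _ hc
              nlinarith
            refine ⟨hax, ?_⟩
            by_contra hc
            push_neg at hc
            have hxy' : x + y ≤ a + b - 1 := by omega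
            have hxb : x + 1 ≤ a + 2*d := by omega
            have h2' : 2*d*(x+y) ≤ 2*d*(a+b-1) := Nat.mul_le_mul_left _ hxy'
            nlinarith [Nat.sub_add_cancel (show 1 ≤ a + b by omega)]
  -- now build the real weighted representation
  refine ⟨fun i => if (i : ℕ) < n1 then (c1 : ℝ) else (c2 : ℝ), (c1 * a + c2 * b : ℕ), ?_, ?_, ?_⟩
  · intro i; dsimp only; split <;> positivity
  · exact_mod_cast hQpos
  · intro S
    set x := (S.filter fun i : Fin (n1+n2) => (i : ℕ) < n1).card with hxdef
    set y := (S.filter fun i : Fin (n1+n2) => ¬ (i : ℕ) < n1).card with hydef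
    have hcard : S.card = x + y := (Finset.card_filter_add_card_filter_not _).symm
    have hsum : ∑ i ∈ S, (if (i : ℕ) < n1 then (c1 : ℝ) else (c2 : ℝ))
        = ((c1 * x + c2 * y : ℕ) : ℝ) := by
      rw [sum_two_weights]; push_cast; ring
    rw [BipWinning, hsum, Nat.cast_le, hcard]
    exact hiff x y (x_le S) (y_le S)

lemma not_weighted_s3 (n1 n2 a b : ℕ) (ha : 1 ≤ a) (han : a + 1 ≤ n1) (hb : 2 ≤ b)
    (hbn : b + 2 ≤ n2) : ¬ IsWeightedGame (BipWinning n1 n2 a b) := by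
  rintro ⟨w, q, hw, hq, hiff⟩
  set W1 : Finset (Fin (n1+n2)) :=
    univ.filter (fun i => (i:ℕ) < a ∨ (n1 ≤ (i:ℕ) ∧ (i:ℕ) < n1 + b)) with hW1
  set W2 : Finset (Fin (n1+n2)) :=
    univ.filter (fun i => (i:ℕ) < a - 1 ∨ (i:ℕ) = a ∨ (n1 ≤ (i:ℕ) ∧ (i:ℕ) < n1 + (b-2)) ∨ n1 + b ≤ (i:ℕ)) with hW2
  set L1 : Finset (Fin (n1+n2)) :=
    univ.filter (fun i => (i:ℕ) < a - 1 ∨ n1 ≤ (i:ℕ)) with hL1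
  set L2 : Finset (Fin (n1+n2)) :=
    univ.filter (fun i => (i:ℕ) < a + 1 ∨ (n1 ≤ (i:ℕ) ∧ (i:ℕ) < n1 + (b-2))) with hL2
  -- cardinalities
  have cW1 : W1.card = a + b := by
    rw [hW1, card_univ_filter_val (fun v => v < a ∨ (n1 ≤ v ∧ v < n1 + b))]
    have h : (range (n1+n2)).filter (fun v => v < a ∨ (n1 ≤ v ∧ v < n1 + b))
        = range a ∪ Ico n1 (n1+b) := by ext v; simp; omega
    rw [h, card_union_of_disjoint (by rw [Finset.disjoint_left]; intro v h1 h2; simp at h1 h2; omega),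
      card_range, Nat.card_Ico]
    omega
  have xW1 : (W1.filter fun i : Fin (n1+n2) => (i:ℕ) < n1).card = a := by
    rw [hW1, Finset.filter_filter,
      card_univ_filter_val (fun v => (v < a ∨ (n1 ≤ v ∧ v < n1 + b)) ∧ v < n1)]
    have h : (range (n1+n2)).filter (fun v => (v < a ∨ (n1 ≤ v ∧ v < n1 + b)) ∧ v < n1)
        = range a := by ext v; simp; omega
    rw [h, card_range]
  have cW2 : W2.card = a + (n2 - 2) := by
    rw [hW2, card_univ_filter_val (fun v => v < a - 1 ∨ v = a ∨ (n1 ≤ v ∧ v < n1 + (b-2)) ∨ n1 + b ≤ v)]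
    have h : (range (n1+n2)).filter (fun v => v < a - 1 ∨ v = a ∨ (n1 ≤ v ∧ v < n1 + (b-2)) ∨ n1 + b ≤ v)
        = range (a-1) ∪ ({a} ∪ (Ico n1 (n1+(b-2)) ∪ Ico (n1+b) (n1+n2))) := by
      ext v; simp; omega
    rw [h, card_union_of_disjoint, card_union_of_disjoint, card_union_of_disjoint]
    · rw [card_range, card_singleton, Nat.card_Ico, Nat.card_Ico]; omega
    · rw [Finset.disjoint_left]; intro v h1 h2; simp at h1 h2; omega
    · rw [Finset.disjoint_left]; intro v h1 h2; simp at h1 h2; omega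
    · rw [Finset.disjoint_left]; intro v h1 h2; simp at h1 h2; omega
  have xW2 : (W2.filter fun i : Fin (n1+n2) => (i:ℕ) < n1).card = a := by
    rw [hW2, Finset.filter_filter,
      card_univ_filter_val (fun v => (v < a - 1 ∨ v = a ∨ (n1 ≤ v ∧ v < n1 + (b-2)) ∨ n1 + b ≤ v) ∧ v < n1)]
    have h : (range (n1+n2)).filter (fun v => (v < a - 1 ∨ v = a ∨ (n1 ≤ v ∧ v < n1 + (b-2)) ∨ n1 + b ≤ v) ∧ v < n1)
        = range (a-1) ∪ {a} := by ext v; simp; omega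
    rw [h, card_union_of_disjoint (by rw [Finset.disjoint_left]; intro v h1 h2; simp at h1 h2; omega),
      card_range, card_singleton]
    omega
  have xL1 : (L1.filter fun i : Fin (n1+n2) => (i:ℕ) < n1).card = a - 1 := by
    rw [hL1, Finset.filter_filter,
      card_univ_filter_val (fun v => (v < a - 1 ∨ n1 ≤ v) ∧ v < n1)]
    have h : (range (n1+n2)).filter (fun v => (v < a - 1 ∨ n1 ≤ v) ∧ v < n1)
        = range (a-1) := by ext v; simp; omega
    rw [h, card_range]
  have cL2 : L2.card = a + b - 1 := by
    rw [hL2, card_univ_filter_val (fun v => v < a + 1 ∨ (n1 ≤ v ∧ v < n1 + (b-2)))]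
    have h : (range (n1+n2)).filter (fun v => v < a + 1 ∨ (n1 ≤ v ∧ v < n1 + (b-2)))
        = range (a+1) ∪ Ico n1 (n1+(b-2)) := by ext v; simp; omega
    rw [h, card_union_of_disjoint (by rw [Finset.disjoint_left]; intro v h1 h2; simp at h1 h2; omega),
      card_range, Nat.card_Ico]
    omega
  -- winning / losing
  have hW1win : q ≤ ∑ i ∈ W1, w i := (hiff W1).mp ⟨by rw [xW1], by rw [cW1]⟩
  have hW2win : q ≤ ∑ i ∈ W2, w i := (hiff W2).mp ⟨by rw [xW2], by rw [cW2]; omega⟩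
  have hL1lose : ∑ i ∈ L1, w i < q := by
    refine lt_of_not_ge fun hq' => ?_
    have := (hiff L1).mpr hq'
    rw [BipWinning, xL1] at this
    omega
  have hL2lose : ∑ i ∈ L2, w i < q := by
    refine lt_of_not_ge fun hq' => ?_
    have := (hiff L2).mpr hq'
    rw [BipWinning, cL2] at this
    omega
  -- trading identity
  have hu : W1 ∪ W2 = L1 ∪ L2 := by
    rw [hW1, hW2, hL1, hL2]
    ext i
    simp only [Finset.mem_union, Finset.mem_filter, Finset.mem_univ, true_and]
    omega
  have hi : W1 ∩ W2 = L1 ∩ L2 := by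
    rw [hW1, hW2, hL1, hL2]
    ext i
    simp only [Finset.mem_inter, Finset.mem_filter, Finset.mem_univ, true_and]
    omega
  have e1 := Finset.sum_union_inter (s₁ := W1) (s₂ := W2) (f := w)
  have e2 := Finset.sum_union_inter (s₁ := L1) (s₂ := L2) (f := w)
  rw [hu, hi] at e1
  linarith

lemma weighted_iff (n1 n2 a b : ℕ) (h1 : 1 ≤ n1) (h2 : 1 ≤ n2) (ha : 1 ≤ a) (ha2 : a ≤ n1)
    (hb : b ≤ n2 - 1) :
    IsWeightedGame (BipWinning n1 n2 a b) ↔ (b = 0 ∨ b = 1 ∨ a = n1 ∨ b = n2 - 1) := by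
  constructor
  · intro hW
    by_contra hc
    push_neg at hc
    obtain ⟨h0, h1', h2', h3'⟩ := hc
    exact not_weighted_s3 n1 n2 a b ha (by omega) (by omega) (by omega) hW
  · exact weighted_of n1 n2 a b h1 h2 ha ha2 (by omega)


def Tn (n : ℕ) : Finset (ℕ × ℕ × ℕ × ℕ) :=
  (range (n+1) ×ˢ range (n+1) ×ˢ range (n+1) ×ˢ range (n+1)).filter
    (fun p => 1 ≤ p.1 ∧ 1 ≤ p.2.1 ∧ p.1 + p.2.1 = n ∧
      1 ≤ p.2.2.1 ∧ p.2.2.1 ≤ p.1 ∧ p.2.2.2 ≤ p.2.1 - 1 ∧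
      (p.2.2.2 = 0 ∨ p.2.2.2 = 1 ∨ p.2.2.1 = p.1 ∨ p.2.2.2 = p.2.1 - 1))

lemma count_eq (n : ℕ) : weightedBipCount n = (Tn n).card := by
  rw [weightedBipCount, ← Set.ncard_coe_finset]
  congr 1
  ext p
  obtain ⟨n1, n2, a, b⟩ := p
  simp only [Set.mem_setOf_eq, Finset.coe_filter, Tn, Finset.mem_filter,
    Finset.mem_product, Finset.mem_range]
  constructor
  · rintro ⟨h1, h2, h3, h4, h5, h6, h7⟩
    exact ⟨⟨by omega, by omega, by omega, by omega⟩, h1, h2, h3, h4, h5, h6,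
      (weighted_iff n1 n2 a b h1 h2 h4 h5 h6).mp h7⟩
  · rintro ⟨-, h1, h2, h3, h4, h5, h6, h7⟩
    exact ⟨h1, h2, h3, h4, h5, h6, (weighted_iff n1 n2 a b h1 h2 h4 h5 h6).mpr h7⟩

lemma two_sum_Ico (m : ℕ) : 2 * ∑ k ∈ Ico 1 m, k = m * (m - 1) := by
  have h := Finset.sum_range_id_mul_two m
  have h2 : ∑ k ∈ range m, k = ∑ k ∈ Ico 1 m, k := by
    rcases Nat.eq_zero_or_pos m with h0 | h0
    · subst h0; simp
    · have hr : range m = insert 0 (Ico 1 m) := by ext v; simp; omega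
      rw [hr, Finset.sum_insert (by simp), zero_add]
  omega

lemma two_sum_Ico_rev (m : ℕ) : 2 * ∑ k ∈ Ico 1 m, (m - k) = m * (m - 1) := by
  have h : ∑ k ∈ Ico 1 m, (m - k) = ∑ k ∈ Ico 1 m, k := by
    apply Finset.sum_nbij' (i := fun k => m - k) (j := fun k => m - k)
    · intro k hk; simp at hk ⊢; omega
    · intro k hk; simp at hk ⊢; omega
    · intro k hk; simp at hk; omega
    · intro k hk; simp at hk; omega
    · intro k hk; simp at hk; omega
  rw [h]; exact two_sum_Ico m

lemma cardA (n : ℕ) :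
    2 * ((Tn n).filter (fun p => p.2.2.2 = 0)).card = n * (n - 1) := by
  have h : ((Tn n).filter (fun p => p.2.2.2 = 0)).card
      = ((Ico 1 n).sigma (fun n1 => Icc 1 n1)).card := by
    apply Finset.card_nbij' (i := fun p => ⟨p.1, p.2.2.1⟩)
      (j := fun q => (q.1, n - q.1, q.2, 0))
    · rintro ⟨n1, n2, a, b⟩ hp
      simp only [Finset.mem_coe, Tn, Finset.mem_filter, Finset.mem_product, Finset.mem_range] at hp
      simp only [Finset.mem_coe, Finset.mem_sigma, Finset.mem_Ico, Finset.mem_Icc]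
      omega
    · rintro ⟨k, a⟩ hq
      simp only [Finset.mem_coe, Finset.mem_sigma, Finset.mem_Ico, Finset.mem_Icc] at hq
      simp only [Finset.mem_coe, Tn, Finset.mem_filter, Finset.mem_product, Finset.mem_range]
      repeat' apply And.intro
      all_goals first | omega | tauto
    · rintro ⟨n1, n2, a, b⟩ hp
      simp only [Finset.mem_coe, Tn, Finset.mem_filter, Finset.mem_product, Finset.mem_range] at hp
      simp only [Prod.mk.injEq]
      repeat' apply And.intro
      all_goals first | omega | tauto
    · rintro ⟨k, a⟩ _; rfl
  rw [h, Finset.card_sigma]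
  have h2 : ∑ k ∈ Ico 1 n, (Icc 1 k).card = ∑ k ∈ Ico 1 n, k := by
    apply Finset.sum_congr rfl; intro k hk; rw [Nat.card_Icc]; simp at hk; omega
  rw [h2]; exact two_sum_Ico n

lemma cardB (n : ℕ) :
    2 * ((Tn n).filter (fun p => ¬p.2.2.2 = 0 ∧ p.2.2.2 = 1)).card = (n-1) * (n - 2) := by
  have h : ((Tn n).filter (fun p => ¬p.2.2.2 = 0 ∧ p.2.2.2 = 1)).card
      = ((Ico 1 (n-1)).sigma (fun n1 => Icc 1 n1)).card := by
    apply Finset.card_nbij' (i := fun p => ⟨p.1, p.2.2.1⟩)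
      (j := fun q => (q.1, n - q.1, q.2, 1))
    · rintro ⟨n1, n2, a, b⟩ hp
      simp only [Finset.mem_coe, Tn, Finset.mem_filter, Finset.mem_product, Finset.mem_range] at hp
      simp only [Finset.mem_coe, Finset.mem_sigma, Finset.mem_Ico, Finset.mem_Icc]
      omega
    · rintro ⟨k, a⟩ hq
      simp only [Finset.mem_coe, Finset.mem_sigma, Finset.mem_Ico, Finset.mem_Icc] at hq
      simp only [Finset.mem_coe, Tn, Finset.mem_filter, Finset.mem_product, Finset.mem_range]
      repeat' apply And.intro
      all_goals first | omega | tauto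
    · rintro ⟨n1, n2, a, b⟩ hp
      simp only [Finset.mem_coe, Tn, Finset.mem_filter, Finset.mem_product, Finset.mem_range] at hp
      simp only [Prod.mk.injEq]
      repeat' apply And.intro
      all_goals first | omega | tauto
    · rintro ⟨k, a⟩ _; rfl
  rw [h, Finset.card_sigma]
  have h2 : ∑ k ∈ Ico 1 (n-1), (Icc 1 k).card = ∑ k ∈ Ico 1 (n-1), k := by
    apply Finset.sum_congr rfl; intro k hk; rw [Nat.card_Icc]; simp at hk; omega
  rw [h2, two_sum_Ico (n-1)]
  congr 1 <;> omega

lemma cardC (n : ℕ) :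
    2 * ((Tn n).filter (fun p => (¬p.2.2.2 = 0 ∧ ¬p.2.2.2 = 1) ∧ p.2.2.2 = p.2.1 - 1)).card
      = (n-2) * (n - 3) := by
  have h : ((Tn n).filter (fun p => (¬p.2.2.2 = 0 ∧ ¬p.2.2.2 = 1) ∧ p.2.2.2 = p.2.1 - 1)).card
      = ((Ico 1 (n-2)).sigma (fun n1 => Icc 1 n1)).card := by
    apply Finset.card_nbij' (i := fun p => ⟨p.1, p.2.2.1⟩)
      (j := fun q => (q.1, n - q.1, q.2, n - q.1 - 1))
    · rintro ⟨n1, n2, a, b⟩ hp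
      simp only [Finset.mem_coe, Tn, Finset.mem_filter, Finset.mem_product, Finset.mem_range] at hp
      simp only [Finset.mem_coe, Finset.mem_sigma, Finset.mem_Ico, Finset.mem_Icc]
      omega
    · rintro ⟨k, a⟩ hq
      simp only [Finset.mem_coe, Finset.mem_sigma, Finset.mem_Ico, Finset.mem_Icc] at hq
      simp only [Finset.mem_coe, Tn, Finset.mem_filter, Finset.mem_product, Finset.mem_range]
      repeat' apply And.intro
      all_goals first | omega | tauto
    · rintro ⟨n1, n2, a, b⟩ hp
      simp only [Finset.mem_coe, Tn, Finset.mem_filter, Finset.mem_product, Finset.mem_range] at hp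
      simp only [Prod.mk.injEq]
      repeat' apply And.intro
      all_goals first | omega | tauto
    · rintro ⟨k, a⟩ _; rfl
  rw [h, Finset.card_sigma]
  have h2 : ∑ k ∈ Ico 1 (n-2), (Icc 1 k).card = ∑ k ∈ Ico 1 (n-2), k := by
    apply Finset.sum_congr rfl; intro k hk; rw [Nat.card_Icc]; simp at hk; omega
  rw [h2, two_sum_Ico (n-2)]
  congr 1 <;> omega

lemma cardD (n : ℕ) :
    2 * ((Tn n).filter (fun p => (¬p.2.2.2 = 0 ∧ ¬p.2.2.2 = 1) ∧ ¬p.2.2.2 = p.2.1 - 1)).card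
      = (n-3) * (n - 4) := by
  have h : ((Tn n).filter (fun p => (¬p.2.2.2 = 0 ∧ ¬p.2.2.2 = 1) ∧ ¬p.2.2.2 = p.2.1 - 1)).card
      = ((Ico 1 (n-3)).sigma (fun k => Icc 2 (n - k - 2))).card := by
    apply Finset.card_nbij' (i := fun p => ⟨p.1, p.2.2.2⟩)
      (j := fun q => (q.1, n - q.1, q.1, q.2))
    · rintro ⟨n1, n2, a, b⟩ hp
      simp only [Finset.mem_coe, Tn, Finset.mem_filter, Finset.mem_product, Finset.mem_range] at hp
      simp only [Finset.mem_coe, Finset.mem_sigma, Finset.mem_Ico, Finset.mem_Icc]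
      omega
    · rintro ⟨k, b⟩ hq
      simp only [Finset.mem_coe, Finset.mem_sigma, Finset.mem_Ico, Finset.mem_Icc] at hq
      simp only [Finset.mem_coe, Tn, Finset.mem_filter, Finset.mem_product, Finset.mem_range]
      repeat' apply And.intro
      all_goals first | omega | tauto
    · rintro ⟨n1, n2, a, b⟩ hp
      simp only [Finset.mem_coe, Tn, Finset.mem_filter, Finset.mem_product, Finset.mem_range] at hp
      simp only [Prod.mk.injEq]
      repeat' apply And.intro
      all_goals first | omega | tauto
    · rintro ⟨k, b⟩ _; rfl
  rw [h, Finset.card_sigma]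
  have h2 : ∑ k ∈ Ico 1 (n-3), (Icc 2 (n - k - 2)).card = ∑ k ∈ Ico 1 (n-3), ((n-3) - k) := by
    apply Finset.sum_congr rfl; intro k hk; rw [Nat.card_Icc]; simp at hk; omega
  rw [h2, two_sum_Ico_rev (n-3)]
  congr 1 <;> omega

lemma card_Tn_split (n : ℕ) :
    (Tn n).card = ((Tn n).filter (fun p => p.2.2.2 = 0)).card
      + ((Tn n).filter (fun p => ¬p.2.2.2 = 0 ∧ p.2.2.2 = 1)).card
      + ((Tn n).filter (fun p => (¬p.2.2.2 = 0 ∧ ¬p.2.2.2 = 1) ∧ p.2.2.2 = p.2.1 - 1)).card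
      + ((Tn n).filter (fun p => (¬p.2.2.2 = 0 ∧ ¬p.2.2.2 = 1) ∧ ¬p.2.2.2 = p.2.1 - 1)).card := by
  classical
  have s1 := Finset.card_filter_add_card_filter_not
    (s := Tn n) (p := fun p : ℕ×ℕ×ℕ×ℕ => p.2.2.2 = 0)
  have s2 := Finset.card_filter_add_card_filter_not
    (s := (Tn n).filter (fun p : ℕ×ℕ×ℕ×ℕ => ¬p.2.2.2 = 0))
    (p := fun p : ℕ×ℕ×ℕ×ℕ => p.2.2.2 = 1)
  have s3 := Finset.card_filter_add_card_filter_not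
    (s := (Tn n).filter (fun p : ℕ×ℕ×ℕ×ℕ => ¬p.2.2.2 = 0 ∧ ¬p.2.2.2 = 1))
    (p := fun p : ℕ×ℕ×ℕ×ℕ => p.2.2.2 = p.2.1 - 1)
  rw [Finset.filter_filter, Finset.filter_filter] at s2
  rw [Finset.filter_filter, Finset.filter_filter] at s3
  have e : ((Tn n).filter (fun p : ℕ×ℕ×ℕ×ℕ => ¬p.2.2.2 = 0 ∧ ¬p.2.2.2 = 1)).card
      = ((Tn n).filter (fun p : ℕ×ℕ×ℕ×ℕ => ¬p.2.2.2 = 0 ∧ ¬(p.2.2.2 = 1))).card := rfl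
  omega


theorem count_weighted_bipartite_min (n : ℕ) :
    (3 ≤ n → weightedBipCount n = 2 * (n - 2) ^ 2 + 2) ∧
    (n ≤ 2 → weightedBipCount n = n - 1) := by
  constructor
  · intro hn
    rw [count_eq]
    have h := card_Tn_split n
    have hA := cardA n
    have hB := cardB n
    have hC := cardC n
    have hD := cardD n
    obtain ⟨m, rfl⟩ : ∃ m, n = m + 3 := ⟨n - 3, by omega⟩
    have e1 : m + 3 - 1 = m + 2 := rfl
    have e2 : m + 3 - 2 = m + 1 := rfl
    have e3 : m + 3 - 3 = m := rfl
    have e4 : m + 3 - 4 = m - 1 := rfl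
    rw [e1] at hA hB
    rw [e2] at hB hC
    rw [e3] at hC hD
    rw [e4] at hD
    have key : 2 * (Tn (m+3)).card = 2 * (2 * (m + 1) ^ 2 + 2) := by
      rcases Nat.eq_zero_or_pos m with h0 | h0
      · subst h0; omega
      · obtain ⟨k, rfl⟩ : ∃ k, m = k + 1 := ⟨m - 1, by omega⟩
        rw [show k + 1 - 1 = k from rfl] at hD
        have goal2 : (k+1+3) * (k+1+2) + (k+1+2) * (k+1+1) + (k+1+1) * (k+1) + (k+1) * k
            = 2 * (2 * (k + 1 + 1) ^ 2 + 2) := by ring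
        omega
    rw [e2]
    omega
  · intro hn
    interval_cases n <;> rw [count_eq] <;> decide
end

section
/- For every integer n ≥ 4, the number of tuples (n₁, n₂, n₃, m₁, m₂, m₃) of integers with n₁, n₂, n₃ ≥ 1, n₁+n₂+n₃ = n, 1 ≤ m₁ ≤ n₁, 1 ≤ m₂ ≤ n₂ − 1, 0 ≤ m₃ ≤ n₃ − 1 such that the complete game with minimum (m₁, m₂, m₃) is weighted, equals (5n³ − 48n² + 157n − 174)/6; for n ≤ 3 this number is 0. -/
open Finset

/-- The number of tripartite invariants `(n₁, n₂, n₃, m₁, m₂, m₃)` with `n₁+n₂+n₃ = n`,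
`1 ≤ m₁ ≤ n₁`, `1 ≤ m₂ ≤ n₂ - 1`, `0 ≤ m₃ ≤ n₃ - 1` whose complete game with minimum
`(m₁, m₂, m₃)` is weighted. -/
noncomputable def weightedTriCount (n : ℕ) : ℕ :=
  {p : ℕ × ℕ × ℕ × ℕ × ℕ × ℕ |
      1 ≤ p.1 ∧ 1 ≤ p.2.1 ∧ 1 ≤ p.2.2.1 ∧ p.1 + p.2.1 + p.2.2.1 = n ∧
      1 ≤ p.2.2.2.1 ∧ p.2.2.2.1 ≤ p.1 ∧
      1 ≤ p.2.2.2.2.1 ∧ p.2.2.2.2.1 ≤ p.2.1 - 1 ∧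
      p.2.2.2.2.2 ≤ p.2.2.1 - 1 ∧
      IsWeightedGame (CGMinWinning ![p.1, p.2.1, p.2.2.1]
        ![p.2.2.2.1, p.2.2.2.2.1, p.2.2.2.2.2])}.ncard


section Game
variable {n1 n2 n3 : ℕ}
lemma sum_nvec (n1 n2 n3 : ℕ) : (∑ h, ![n1,n2,n3] h) = n1 + n2 + n3 := by
  simp [Fin.sum_univ_three]
lemma val_lt (i : Fin (∑ h, ![n1,n2,n3] h)) : (i : ℕ) < n1 + n2 + n3 :=
  lt_of_lt_of_le i.isLt (le_of_eq (sum_nvec n1 n2 n3))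

lemma card_filter_two (p : Fin (∑ h, ![n1,n2,n3] h) → Prop) [DecidablePred p]
    (a1 b1 a2 b2 : ℕ) (h12 : b1 ≤ a2) (h2 : a2 ≤ b2) (hb : b2 ≤ n1 + n2 + n3)
    (h : ∀ i : Fin (∑ h, ![n1,n2,n3] h),
      p i ↔ ((a1 ≤ (i:ℕ) ∧ (i:ℕ) < b1) ∨ (a2 ≤ (i:ℕ) ∧ (i:ℕ) < b2))) :
    (univ.filter p).card = (b1 - a1) + (b2 - a2) := by
  have himg : ((univ.filter p).image Fin.val) = Ico a1 b1 ∪ Ico a2 b2 := by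
    ext j
    simp only [Finset.mem_image, Finset.mem_filter, Finset.mem_union, Finset.mem_Ico,
      Finset.mem_univ, true_and]
    constructor
    · rintro ⟨i, hP, rfl⟩
      exact (h i).1 hP
    · intro hj
      have hjlt : j < ∑ h, ![n1,n2,n3] h := by
        rw [sum_nvec]; omega
      exact ⟨⟨j, hjlt⟩, (h ⟨j, hjlt⟩).2 (by simpa using hj), rfl⟩
  have hcard := Finset.card_image_of_injective (univ.filter p) Fin.val_injective
  rw [himg] at hcard
  have hdisj : Disjoint (Ico a1 b1) (Ico a2 b2) := by
    rw [Finset.disjoint_left]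
    intro x hx1 hx2
    simp only [Finset.mem_Ico] at hx1 hx2
    omega
  rw [Finset.card_union_of_disjoint hdisj, Nat.card_Ico, Nat.card_Ico] at hcard
  omega

lemma card_filter_one (p : Fin (∑ h, ![n1,n2,n3] h) → Prop) [DecidablePred p]
    (a b : ℕ) (hb : b ≤ n1 + n2 + n3)
    (h : ∀ i : Fin (∑ h, ![n1,n2,n3] h), p i ↔ (a ≤ (i:ℕ) ∧ (i:ℕ) < b)) :
    (univ.filter p).card = b - a := by
  have := card_filter_two p a b b b le_rfl le_rfl hb (by
    intro i; rw [h i]; constructor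
    · exact Or.inl
    · rintro (hh | hh) ; exact hh; omega)
  omega

lemma sum_blockweights (S : Finset (Fin (∑ h, ![n1,n2,n3] h))) (A B C : ℝ) :
    ∑ i ∈ S, (if (i:ℕ) < n1 then A else if (i:ℕ) < n1 + n2 then B else C) =
    ((S.filter fun i : Fin (∑ h, ![n1,n2,n3] h) => (i : ℕ) < n1).card : ℝ) * A +
    ((S.filter fun i : Fin (∑ h, ![n1,n2,n3] h) => n1 ≤ (i : ℕ) ∧ (i : ℕ) < n1 + n2).card : ℝ) * B +
    ((S.filter fun i : Fin (∑ h, ![n1,n2,n3] h) => n1 + n2 ≤ (i : ℕ) ∧ (i : ℕ) < n1 + n2 + n3).card : ℝ) * C := by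
  have key : ∀ i ∈ S, (if (i:ℕ) < n1 then A else if (i:ℕ) < n1 + n2 then B else C) =
      (if (i:ℕ) < n1 then A else 0) + (if n1 ≤ (i:ℕ) ∧ (i:ℕ) < n1 + n2 then B else 0)
      + (if n1 + n2 ≤ (i:ℕ) ∧ (i:ℕ) < n1 + n2 + n3 then C else 0) := by
    intro i _
    have := val_lt i
    split_ifs <;> first | omega | ring
  rw [Finset.sum_congr rfl key]
  rw [Finset.sum_add_distrib, Finset.sum_add_distrib]
  rw [← Finset.sum_filter, ← Finset.sum_filter, ← Finset.sum_filter]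
  simp [Finset.sum_const, nsmul_eq_mul]

-- three block counts
lemma blockCount0 (S : Finset (Fin (∑ h, ![n1,n2,n3] h))) :
    blockCount ![n1,n2,n3] S 0 = (S.filter fun i : Fin (∑ h, ![n1,n2,n3] h) => (i : ℕ) < n1).card := by
  have h0 : (Finset.Iio (0 : Fin 3)) = ∅ := by decide
  unfold blockCount
  rw [h0]
  simp

lemma blockCount1 (S : Finset (Fin (∑ h, ![n1,n2,n3] h))) :
    blockCount ![n1,n2,n3] S 1 =
      (S.filter fun i : Fin (∑ h, ![n1,n2,n3] h) => n1 ≤ (i : ℕ) ∧ (i : ℕ) < n1 + n2).card := by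
  have h0 : (Finset.Iio (1 : Fin 3)) = {0} := by decide
  unfold blockCount
  rw [h0]
  simp

lemma blockCount2 (S : Finset (Fin (∑ h, ![n1,n2,n3] h))) :
    blockCount ![n1,n2,n3] S 2 =
      (S.filter fun i : Fin (∑ h, ![n1,n2,n3] h) => n1 + n2 ≤ (i : ℕ) ∧ (i : ℕ) < n1 + n2 + n3).card := by
  have h0 : (Finset.Iio (2 : Fin 3)) = {0, 1} := by decide
  unfold blockCount
  rw [h0]
  simp

lemma cgmin_iff (m1 m2 m3 : ℕ) (S : Finset (Fin (∑ h, ![n1,n2,n3] h))) :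
    CGMinWinning ![n1,n2,n3] ![m1,m2,m3] S ↔
      (m1 ≤ blockCount ![n1,n2,n3] S 0 ∧
       m1 + m2 ≤ blockCount ![n1,n2,n3] S 0 + blockCount ![n1,n2,n3] S 1 ∧
       m1 + m2 + m3 ≤ blockCount ![n1,n2,n3] S 0 + blockCount ![n1,n2,n3] S 1
          + blockCount ![n1,n2,n3] S 2) := by
  have h0 : (Finset.Iic (0 : Fin 3)) = {0} := by decide
  have h1 : (Finset.Iic (1 : Fin 3)) = {0, 1} := by decide
  have h2 : (Finset.Iic (2 : Fin 3)) = {0, 1, 2} := by decide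
  constructor
  · intro H
    refine ⟨?_, ?_, ?_⟩
    · have := H 0; rwa [h0, Finset.sum_singleton, Finset.sum_singleton] at this
    · have := H 1; rw [h1] at this; simpa using this
    · have := H 2; rw [h2] at this; simpa [add_assoc] using this
  · rintro ⟨H0, H1, H2⟩ k
    have hk : k = 0 ∨ k = 1 ∨ k = 2 := by
      have : ∀ j : Fin 3, j = 0 ∨ j = 1 ∨ j = 2 := by decide
      exact this k
    rcases hk with rfl | rfl | rfl
    · rw [h0]; simpa using H0
    · rw [h1]; simpa using H1
    · rw [h2]; simpa [add_assoc] using H2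


-- NEW MATERIAL --

lemma blockCount0_le (S : Finset (Fin (∑ h, ![n1,n2,n3] h))) :
    blockCount ![n1,n2,n3] S 0 ≤ n1 := by
  rw [blockCount0]
  calc (S.filter fun i : Fin (∑ h, ![n1,n2,n3] h) => (i : ℕ) < n1).card
      ≤ (univ.filter fun i : Fin (∑ h, ![n1,n2,n3] h) => (i : ℕ) < n1).card :=
        Finset.card_le_card (Finset.filter_subset_filter _ (Finset.subset_univ S))
    _ = n1 - 0 := card_filter_one _ 0 n1 (by omega) (by intro i; omega)
    _ = n1 := by omega

lemma blockCount1_le (S : Finset (Fin (∑ h, ![n1,n2,n3] h))) :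
    blockCount ![n1,n2,n3] S 1 ≤ n2 := by
  rw [blockCount1]
  calc (S.filter fun i : Fin (∑ h, ![n1,n2,n3] h) => n1 ≤ (i : ℕ) ∧ (i : ℕ) < n1 + n2).card
      ≤ (univ.filter fun i : Fin (∑ h, ![n1,n2,n3] h) => n1 ≤ (i : ℕ) ∧ (i : ℕ) < n1 + n2).card :=
        Finset.card_le_card (Finset.filter_subset_filter _ (Finset.subset_univ S))
    _ = (n1 + n2) - n1 := card_filter_one _ n1 (n1+n2) (by omega) (by intro i; omega)
    _ = n2 := by omega

lemma blockCount2_le (S : Finset (Fin (∑ h, ![n1,n2,n3] h))) :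
    blockCount ![n1,n2,n3] S 2 ≤ n3 := by
  rw [blockCount2]
  calc (S.filter fun i : Fin (∑ h, ![n1,n2,n3] h) => n1 + n2 ≤ (i : ℕ) ∧ (i : ℕ) < n1 + n2 + n3).card
      ≤ (univ.filter fun i : Fin (∑ h, ![n1,n2,n3] h) => n1 + n2 ≤ (i : ℕ) ∧ (i : ℕ) < n1 + n2 + n3).card :=
        Finset.card_le_card (Finset.filter_subset_filter _ (Finset.subset_univ S))
    _ = (n1 + n2 + n3) - (n1 + n2) := card_filter_one _ (n1+n2) (n1+n2+n3) (by omega) (by intro i; omega)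
    _ = n3 := by omega

lemma isWeighted_of_cases {m1 m2 m3 : ℕ} (a b c : ℕ) (hq0 : 0 < a*m1 + b*m2 + c*m3)
    (hiff : ∀ y1 y2 y3 : ℕ, y1 ≤ n1 → y2 ≤ n2 → y3 ≤ n3 →
      ((m1 ≤ y1 ∧ m1+m2 ≤ y1+y2 ∧ m1+m2+m3 ≤ y1+y2+y3) ↔
        (a*m1+b*m2+c*m3 ≤ a*y1+b*y2+c*y3))) :
    IsWeightedGame (CGMinWinning ![n1,n2,n3] ![m1,m2,m3]) := by
  refine ⟨fun i => if (i:ℕ) < n1 then (a:ℝ) else if (i:ℕ) < n1 + n2 then (b:ℝ) else (c:ℝ),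
    ((a*m1+b*m2+c*m3 : ℕ) : ℝ), ?_, ?_, ?_⟩
  · intro i; dsimp only; split_ifs <;> exact Nat.cast_nonneg _
  · exact_mod_cast hq0
  · intro S
    rw [cgmin_iff, sum_blockweights S (a:ℝ) (b:ℝ) (c:ℝ)]
    rw [← blockCount0, ← blockCount1, ← blockCount2]
    have hcast : ((blockCount ![n1,n2,n3] S 0 : ℕ) : ℝ) * (a:ℝ) +
        ((blockCount ![n1,n2,n3] S 1 : ℕ) : ℝ) * (b:ℝ) +
        ((blockCount ![n1,n2,n3] S 2 : ℕ) : ℝ) * (c:ℝ) =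
        ((a * blockCount ![n1,n2,n3] S 0 + b * blockCount ![n1,n2,n3] S 1 +
          c * blockCount ![n1,n2,n3] S 2 : ℕ) : ℝ) := by
      push_cast; ring
    rw [hcast, Nat.cast_le]
    exact hiff _ _ _ (blockCount0_le S) (blockCount1_le S) (blockCount2_le S)

-- trade lemma
lemma not_weighted_of_trade {N : ℕ} {Win : Finset (Fin N) → Prop} (S1 S2 T1 T2 : Finset (Fin N))
    (hS1 : Win S1) (hS2 : Win S2) (hT1 : ¬ Win T1) (hT2 : ¬ Win T2)
    (hkey : ∀ w : Fin N → ℝ, ∑ i ∈ S1, w i + ∑ i ∈ S2, w i = ∑ i ∈ T1, w i + ∑ i ∈ T2, w i) :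
    ¬ IsWeightedGame Win := by
  rintro ⟨w, q, hw, hq, h⟩
  have h1 := (h S1).1 hS1
  have h2 := (h S2).1 hS2
  have h3 : ¬ q ≤ ∑ i ∈ T1, w i := fun hh => hT1 ((h T1).2 hh)
  have h4 : ¬ q ≤ ∑ i ∈ T2, w i := fun hh => hT2 ((h T2).2 hh)
  push_neg at h3 h4
  have := hkey w
  linarith


lemma blockCount0_eval (P : Fin (∑ h, ![n1,n2,n3] h) → Prop) [DecidablePred P]
    (a1 b1 a2 b2 : ℕ) (h12 : b1 ≤ a2) (h2 : a2 ≤ b2) (hb : b2 ≤ n1 + n2 + n3)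
    (h : ∀ i : Fin (∑ h, ![n1,n2,n3] h), (P i ∧ (i:ℕ) < n1) ↔
      ((a1 ≤ (i:ℕ) ∧ (i:ℕ) < b1) ∨ (a2 ≤ (i:ℕ) ∧ (i:ℕ) < b2))) :
    blockCount ![n1,n2,n3] (univ.filter P) 0 = (b1 - a1) + (b2 - a2) := by
  rw [blockCount0, Finset.filter_filter]
  exact card_filter_two _ a1 b1 a2 b2 h12 h2 hb h

lemma blockCount1_eval (P : Fin (∑ h, ![n1,n2,n3] h) → Prop) [DecidablePred P]
    (a1 b1 a2 b2 : ℕ) (h12 : b1 ≤ a2) (h2 : a2 ≤ b2) (hb : b2 ≤ n1 + n2 + n3)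
    (h : ∀ i : Fin (∑ h, ![n1,n2,n3] h), (P i ∧ (n1 ≤ (i:ℕ) ∧ (i:ℕ) < n1 + n2)) ↔
      ((a1 ≤ (i:ℕ) ∧ (i:ℕ) < b1) ∨ (a2 ≤ (i:ℕ) ∧ (i:ℕ) < b2))) :
    blockCount ![n1,n2,n3] (univ.filter P) 1 = (b1 - a1) + (b2 - a2) := by
  rw [blockCount1, Finset.filter_filter]
  exact card_filter_two _ a1 b1 a2 b2 h12 h2 hb h

lemma blockCount2_eval (P : Fin (∑ h, ![n1,n2,n3] h) → Prop) [DecidablePred P]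
    (a1 b1 a2 b2 : ℕ) (h12 : b1 ≤ a2) (h2 : a2 ≤ b2) (hb : b2 ≤ n1 + n2 + n3)
    (h : ∀ i : Fin (∑ h, ![n1,n2,n3] h), (P i ∧ (n1 + n2 ≤ (i:ℕ) ∧ (i:ℕ) < n1 + n2 + n3)) ↔
      ((a1 ≤ (i:ℕ) ∧ (i:ℕ) < b1) ∨ (a2 ≤ (i:ℕ) ∧ (i:ℕ) < b2))) :
    blockCount ![n1,n2,n3] (univ.filter P) 2 = (b1 - a1) + (b2 - a2) := by
  rw [blockCount2, Finset.filter_filter]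
  exact card_filter_two _ a1 b1 a2 b2 h12 h2 hb h

lemma key_of_pred (P1 P2 Q1 Q2 : Fin (∑ h, ![n1,n2,n3] h) → Prop)
    [DecidablePred P1] [DecidablePred P2] [DecidablePred Q1] [DecidablePred Q2]
    (h : ∀ i : Fin (∑ h, ![n1,n2,n3] h), ∀ w : ℝ,
      (if P1 i then w else 0) + (if P2 i then w else 0) =
      (if Q1 i then w else 0) + (if Q2 i then w else 0)) :
    ∀ w : Fin (∑ h, ![n1,n2,n3] h) → ℝ,
      ∑ i ∈ univ.filter P1, w i + ∑ i ∈ univ.filter P2, w i =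
      ∑ i ∈ univ.filter Q1, w i + ∑ i ∈ univ.filter Q2, w i := by
  intro w
  rw [Finset.sum_filter, Finset.sum_filter, Finset.sum_filter, Finset.sum_filter,
    ← Finset.sum_add_distrib, ← Finset.sum_add_distrib]
  exact Finset.sum_congr rfl fun i _ => h i (w i)

lemma not_weighted_N2 {m1 m2 m3 : ℕ} (hm11 : 1 ≤ m1) (hd : m1 + 1 ≤ n1)
    (hm21 : 1 ≤ m2) (hm2n : m2 + 1 ≤ n2) (hm31 : 1 ≤ m3) (hm3n : m3 + 1 ≤ n3) :
    ¬ IsWeightedGame (CGMinWinning ![n1,n2,n3] ![m1,m2,m3]) := by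
  classical
  apply not_weighted_of_trade
    (univ.filter fun i : Fin (∑ h, ![n1,n2,n3] h) =>
      ((i:ℕ) < m1) ∨ (n1 ≤ (i:ℕ) ∧ (i:ℕ) < n1+m2) ∨ (n1+n2 ≤ (i:ℕ) ∧ (i:ℕ) < n1+n2+m3))
    (univ.filter fun i : Fin (∑ h, ![n1,n2,n3] h) =>
      ((i:ℕ) < m1-1 ∨ (i:ℕ) = m1) ∨ ((n1 ≤ (i:ℕ) ∧ (i:ℕ) < n1+m2-1) ∨ (i:ℕ) = n1+m2) ∨
      ((n1+n2 ≤ (i:ℕ) ∧ (i:ℕ) < n1+n2+m3-1) ∨ (i:ℕ) = n1+n2+m3))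
    (univ.filter fun i : Fin (∑ h, ![n1,n2,n3] h) =>
      ((i:ℕ) < m1-1) ∨ (n1 ≤ (i:ℕ) ∧ (i:ℕ) < n1+m2+1) ∨ (n1+n2 ≤ (i:ℕ) ∧ (i:ℕ) < n1+n2+m3+1))
    (univ.filter fun i : Fin (∑ h, ![n1,n2,n3] h) =>
      ((i:ℕ) < m1+1) ∨ (n1 ≤ (i:ℕ) ∧ (i:ℕ) < n1+m2-1) ∨ (n1+n2 ≤ (i:ℕ) ∧ (i:ℕ) < n1+n2+m3-1))
  · -- Win S1
    rw [cgmin_iff]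
    rw [blockCount0_eval _ 0 m1 m1 m1 le_rfl le_rfl (by omega) (fun i => by omega),
        blockCount1_eval _ n1 (n1+m2) (n1+m2) (n1+m2) le_rfl le_rfl (by omega) (fun i => by omega),
        blockCount2_eval _ (n1+n2) (n1+n2+m3) (n1+n2+m3) (n1+n2+m3) le_rfl le_rfl (by omega) (fun i => by omega)]
    omega
  · -- Win S2
    rw [cgmin_iff]
    rw [blockCount0_eval _ 0 (m1-1) m1 (m1+1) (by omega) (by omega) (by omega) (fun i => by omega),
        blockCount1_eval _ n1 (n1+m2-1) (n1+m2) (n1+m2+1) (by omega) (by omega) (by omega) (fun i => by omega),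
        blockCount2_eval _ (n1+n2) (n1+n2+m3-1) (n1+n2+m3) (n1+n2+m3+1) (by omega) (by omega) (by omega) (fun i => by omega)]
    omega
  · -- not Win T1
    rw [cgmin_iff]
    rw [blockCount0_eval _ 0 (m1-1) (m1-1) (m1-1) le_rfl le_rfl (by omega) (fun i => by omega),
        blockCount1_eval _ n1 (n1+m2+1) (n1+m2+1) (n1+m2+1) le_rfl le_rfl (by omega) (fun i => by omega),
        blockCount2_eval _ (n1+n2) (n1+n2+m3+1) (n1+n2+m3+1) (n1+n2+m3+1) le_rfl le_rfl (by omega) (fun i => by omega)]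
    omega
  · -- not Win T2
    rw [cgmin_iff]
    rw [blockCount0_eval _ 0 (m1+1) (m1+1) (m1+1) le_rfl le_rfl (by omega) (fun i => by omega),
        blockCount1_eval _ n1 (n1+m2-1) (n1+m2-1) (n1+m2-1) le_rfl le_rfl (by omega) (fun i => by omega),
        blockCount2_eval _ (n1+n2) (n1+n2+m3-1) (n1+n2+m3-1) (n1+n2+m3-1) le_rfl le_rfl (by omega) (fun i => by omega)]
    omega
  · -- key identity
    apply key_of_pred
    intro i w
    have := val_lt i
    split_ifs <;> first | omega | ring

lemma not_weighted_N1 {m1 m2 : ℕ} (hm11 : 1 ≤ m1) (hd : m1 + 1 ≤ n1)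
    (hm21 : 2 ≤ m2) (hm2n : m2 + 2 ≤ n2) :
    ¬ IsWeightedGame (CGMinWinning ![n1,n2,n3] ![m1,m2,0]) := by
  classical
  apply not_weighted_of_trade
    (univ.filter fun i : Fin (∑ h, ![n1,n2,n3] h) =>
      ((i:ℕ) < m1) ∨ (n1 ≤ (i:ℕ) ∧ (i:ℕ) < n1+m2))
    (univ.filter fun i : Fin (∑ h, ![n1,n2,n3] h) =>
      ((i:ℕ) < m1-1 ∨ (i:ℕ) = m1) ∨ ((n1 ≤ (i:ℕ) ∧ (i:ℕ) < n1+m2-2) ∨ (n1+m2 ≤ (i:ℕ) ∧ (i:ℕ) < n1+m2+2)))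
    (univ.filter fun i : Fin (∑ h, ![n1,n2,n3] h) =>
      ((i:ℕ) < m1-1) ∨ (n1 ≤ (i:ℕ) ∧ (i:ℕ) < n1+m2+2))
    (univ.filter fun i : Fin (∑ h, ![n1,n2,n3] h) =>
      ((i:ℕ) < m1+1) ∨ (n1 ≤ (i:ℕ) ∧ (i:ℕ) < n1+m2-2))
  · rw [cgmin_iff]
    rw [blockCount0_eval _ 0 m1 m1 m1 le_rfl le_rfl (by omega) (fun i => by omega),
        blockCount1_eval _ n1 (n1+m2) (n1+m2) (n1+m2) le_rfl le_rfl (by omega) (fun i => by omega),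
        blockCount2_eval _ 0 0 0 0 le_rfl le_rfl (by omega) (fun i => by omega)]
    omega
  · rw [cgmin_iff]
    rw [blockCount0_eval _ 0 (m1-1) m1 (m1+1) (by omega) (by omega) (by omega) (fun i => by omega),
        blockCount1_eval _ n1 (n1+m2-2) (n1+m2) (n1+m2+2) (by omega) (by omega) (by omega) (fun i => by omega),
        blockCount2_eval _ 0 0 0 0 le_rfl le_rfl (by omega) (fun i => by omega)]
    omega
  · rw [cgmin_iff]
    rw [blockCount0_eval _ 0 (m1-1) (m1-1) (m1-1) le_rfl le_rfl (by omega) (fun i => by omega),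
        blockCount1_eval _ n1 (n1+m2+2) (n1+m2+2) (n1+m2+2) le_rfl le_rfl (by omega) (fun i => by omega),
        blockCount2_eval _ 0 0 0 0 le_rfl le_rfl (by omega) (fun i => by omega)]
    omega
  · rw [cgmin_iff]
    rw [blockCount0_eval _ 0 (m1+1) (m1+1) (m1+1) le_rfl le_rfl (by omega) (fun i => by omega),
        blockCount1_eval _ n1 (n1+m2-2) (n1+m2-2) (n1+m2-2) le_rfl le_rfl (by omega) (fun i => by omega),
        blockCount2_eval _ 0 0 0 0 le_rfl le_rfl (by omega) (fun i => by omega)]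
    omega
  · apply key_of_pred
    intro i w
    have := val_lt i
    split_ifs <;> first | omega | ring

lemma not_weighted_N3 {m1 m2 m3 : ℕ} (hm11 : 1 ≤ m1) (hm1n : m1 ≤ n1)
    (hm21 : 1 ≤ m2) (hm2n : m2 + 1 ≤ n2) (hm31 : 2 ≤ m3) (hm3n : m3 + 2 ≤ n3) :
    ¬ IsWeightedGame (CGMinWinning ![n1,n2,n3] ![m1,m2,m3]) := by
  classical
  apply not_weighted_of_trade
    (univ.filter fun i : Fin (∑ h, ![n1,n2,n3] h) =>
      ((i:ℕ) < m1) ∨ (n1 ≤ (i:ℕ) ∧ (i:ℕ) < n1+m2) ∨ (n1+n2 ≤ (i:ℕ) ∧ (i:ℕ) < n1+n2+m3))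
    (univ.filter fun i : Fin (∑ h, ![n1,n2,n3] h) =>
      ((i:ℕ) < m1) ∨ ((n1 ≤ (i:ℕ) ∧ (i:ℕ) < n1+m2-1) ∨ (i:ℕ) = n1+m2) ∨
      ((n1+n2 ≤ (i:ℕ) ∧ (i:ℕ) < n1+n2+m3-2) ∨ (n1+n2+m3 ≤ (i:ℕ) ∧ (i:ℕ) < n1+n2+m3+2)))
    (univ.filter fun i : Fin (∑ h, ![n1,n2,n3] h) =>
      ((i:ℕ) < m1) ∨ (n1 ≤ (i:ℕ) ∧ (i:ℕ) < n1+m2+1) ∨ (n1+n2 ≤ (i:ℕ) ∧ (i:ℕ) < n1+n2+m3-2))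
    (univ.filter fun i : Fin (∑ h, ![n1,n2,n3] h) =>
      ((i:ℕ) < m1) ∨ (n1 ≤ (i:ℕ) ∧ (i:ℕ) < n1+m2-1) ∨ (n1+n2 ≤ (i:ℕ) ∧ (i:ℕ) < n1+n2+m3+2))
  · rw [cgmin_iff]
    rw [blockCount0_eval _ 0 m1 m1 m1 le_rfl le_rfl (by omega) (fun i => by omega),
        blockCount1_eval _ n1 (n1+m2) (n1+m2) (n1+m2) le_rfl le_rfl (by omega) (fun i => by omega),
        blockCount2_eval _ (n1+n2) (n1+n2+m3) (n1+n2+m3) (n1+n2+m3) le_rfl le_rfl (by omega) (fun i => by omega)]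
    omega
  · rw [cgmin_iff]
    rw [blockCount0_eval _ 0 m1 m1 m1 le_rfl le_rfl (by omega) (fun i => by omega),
        blockCount1_eval _ n1 (n1+m2-1) (n1+m2) (n1+m2+1) (by omega) (by omega) (by omega) (fun i => by omega),
        blockCount2_eval _ (n1+n2) (n1+n2+m3-2) (n1+n2+m3) (n1+n2+m3+2) (by omega) (by omega) (by omega) (fun i => by omega)]
    omega
  · rw [cgmin_iff]
    rw [blockCount0_eval _ 0 m1 m1 m1 le_rfl le_rfl (by omega) (fun i => by omega),
        blockCount1_eval _ n1 (n1+m2+1) (n1+m2+1) (n1+m2+1) le_rfl le_rfl (by omega) (fun i => by omega),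
        blockCount2_eval _ (n1+n2) (n1+n2+m3-2) (n1+n2+m3-2) (n1+n2+m3-2) le_rfl le_rfl (by omega) (fun i => by omega)]
    omega
  · rw [cgmin_iff]
    rw [blockCount0_eval _ 0 m1 m1 m1 le_rfl le_rfl (by omega) (fun i => by omega),
        blockCount1_eval _ n1 (n1+m2-1) (n1+m2-1) (n1+m2-1) le_rfl le_rfl (by omega) (fun i => by omega),
        blockCount2_eval _ (n1+n2) (n1+n2+m3+2) (n1+n2+m3+2) (n1+n2+m3+2) le_rfl le_rfl (by omega) (fun i => by omega)]
    omega
  · apply key_of_pred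
    intro i w
    have := val_lt i
    split_ifs <;> first | omega | ring



end Game

lemma decomp {a b c x y z : ℕ} (hba : b ≤ a) (hcb : c ≤ b) :
    a*x + b*y + c*z = (a-b)*x + (b-c)*(x+y) + c*(x+y+z) := by
  zify [hba, hcb]; ring

lemma q_le_of_win {a b c m1 m2 m3 y1 y2 y3 : ℕ} (hba : b ≤ a) (hcb : c ≤ b)
    (h1 : m1 ≤ y1) (h2 : m1+m2 ≤ y1+y2) (h3 : m1+m2+m3 ≤ y1+y2+y3) :
    a*m1 + b*m2 + c*m3 ≤ a*y1 + b*y2 + c*y3 := by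
  rw [decomp hba hcb, decomp hba hcb]
  exact add_le_add (add_le_add (Nat.mul_le_mul_left _ h1) (Nat.mul_le_mul_left _ h2))
    (Nat.mul_le_mul_left _ h3)

-- Case A: m2 = 1, m3 = 0 ; weights (n2, 1, 0), quota n2*m1+1
lemma case_a {n1 n2 n3 m1 y1 y2 y3 : ℕ}
    (hm11 : 1 ≤ m1) (hm1n : m1 ≤ n1) (hn2 : 2 ≤ n2)
    (hy1 : y1 ≤ n1) (hy2 : y2 ≤ n2) (hy3 : y3 ≤ n3) :
    (m1 ≤ y1 ∧ m1 + 1 ≤ y1 + y2 ∧ m1 + 1 + 0 ≤ y1 + y2 + y3) ↔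
      n2*m1 + 1*1 + 0*0 ≤ n2*y1 + 1*y2 + 0*y3 := by
  constructor
  · rintro ⟨h1, h2, h3⟩
    rcases Nat.lt_or_ge y1 (m1+1) with h | h
    · have : y1 = m1 := by omega
      subst this
      have : 1 ≤ y2 := by omega
      nlinarith
    · nlinarith
  · intro hq
    refine ⟨?_, ?_, ?_⟩
    · by_contra hc; push_neg at hc
      have h1 : y1 + 1 ≤ m1 := hc
      nlinarith
    · by_contra hc; push_neg at hc
      have h2 : y1 + y2 ≤ m1 := by omega
      nlinarith
    · by_contra hc; push_neg at hc
      have h2 : y1 + y2 ≤ m1 := by omega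
      nlinarith

-- Case B: m3 = 0, n2 = m2+1 ; weights (d+2, d+1, 0), d = n1-m1
lemma case_b {n1 n2 n3 m1 m2 d y1 y2 y3 : ℕ}
    (hm11 : 1 ≤ m1) (hd : n1 = m1 + d) (hm21 : 1 ≤ m2) (hn2 : n2 = m2 + 1)
    (hy1 : y1 ≤ n1) (hy2 : y2 ≤ n2) (hy3 : y3 ≤ n3) :
    (m1 ≤ y1 ∧ m1 + m2 ≤ y1 + y2 ∧ m1 + m2 + 0 ≤ y1 + y2 + y3) ↔
      (d+2)*m1 + (d+1)*m2 + 0*0 ≤ (d+2)*y1 + (d+1)*y2 + 0*y3 := by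
  subst hd hn2
  constructor
  · rintro ⟨h1, h2, h3⟩
    nlinarith
  · intro hq
    refine ⟨?_, ?_, ?_⟩
    · by_contra hc; push_neg at hc
      have h1 : y1 + 1 ≤ m1 := hc
      nlinarith
    · by_contra hc; push_neg at hc
      have h2 : y1 + y2 + 1 ≤ m1 + m2 := by omega
      nlinarith
    · by_contra hc; push_neg at hc
      have h2 : y1 + y2 + 1 ≤ m1 + m2 := by omega
      nlinarith

-- Case C: m3 = 0, n1 = m1 ; weights (α+1, 1, 0), α = n2-m2 ≥ 1
lemma case_c {n1 n2 n3 m1 m2 a y1 y2 y3 : ℕ}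
    (hm11 : 1 ≤ m1) (hm1n : n1 = m1) (hm21 : 1 ≤ m2) (hn2 : n2 = m2 + a) (ha : 1 ≤ a)
    (hy1 : y1 ≤ n1) (hy2 : y2 ≤ n2) (hy3 : y3 ≤ n3) :
    (m1 ≤ y1 ∧ m1 + m2 ≤ y1 + y2 ∧ m1 + m2 + 0 ≤ y1 + y2 + y3) ↔
      (a+1)*m1 + 1*m2 + 0*0 ≤ (a+1)*y1 + 1*y2 + 0*y3 := by
  subst hn2
  rw [hm1n] at hy1
  constructor
  · rintro ⟨h1, h2, h3⟩
    nlinarith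
  · intro hq
    refine ⟨?_, ?_, ?_⟩
    · by_contra hc; push_neg at hc
      have h1 : y1 + 1 ≤ m1 := hc
      nlinarith
    · by_contra hc; push_neg at hc
      have h2 : y1 + y2 + 1 ≤ m1 + m2 := by omega
      nlinarith
    · by_contra hc; push_neg at hc
      have h2 : y1 + y2 + 1 ≤ m1 + m2 := by omega
      nlinarith

-- Case D: m3 = 1, n1 = m1 ; weights (α*(β+1)+β+1, β+1, 1)
lemma case_d {n1 n2 n3 m1 m2 a b y1 y2 y3 : ℕ}
    (hm11 : 1 ≤ m1) (hm1n : n1 = m1) (hm21 : 1 ≤ m2) (hn2 : n2 = m2 + a) (ha : 1 ≤ a)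
    (hn3 : n3 = 1 + b) (hb : 1 ≤ b)
    (hy1 : y1 ≤ n1) (hy2 : y2 ≤ n2) (hy3 : y3 ≤ n3) :
    (m1 ≤ y1 ∧ m1 + m2 ≤ y1 + y2 ∧ m1 + m2 + 1 ≤ y1 + y2 + y3) ↔
      (a*(b+1)+b+1)*m1 + (b+1)*m2 + 1*1 ≤ (a*(b+1)+b+1)*y1 + (b+1)*y2 + 1*y3 := by
  subst hn2 hn3
  rw [hm1n] at hy1
  constructor
  · rintro ⟨h1, h2, h3⟩
    have := q_le_of_win (a := a*(b+1)+b+1) (b := b+1) (c := 1)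
      (by nlinarith) (by omega) h1 h2 h3
    omega
  · intro hq
    refine ⟨?_, ?_, ?_⟩
    · by_contra hc; push_neg at hc
      have h1 : y1 + 1 ≤ m1 := hc
      nlinarith [Nat.mul_le_mul_left (a*(b+1)+b+1) h1, Nat.mul_le_mul_left (b+1) hy2]
    · by_contra hc; push_neg at hc
      have h2 : y1 + y2 + 1 ≤ m1 + m2 := by omega
      nlinarith [Nat.mul_le_mul_left (a*(b+1)) hy1, Nat.mul_le_mul_left (b+1) h2]
    · by_contra hc; push_neg at hc
      have h3 : y1 + y2 + y3 ≤ m1 + m2 := by omega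
      have h2 : y1 + y2 ≤ m1 + m2 := by omega
      nlinarith [Nat.mul_le_mul_left (a*(b+1)) hy1, Nat.mul_le_mul_left b h2]

-- Case E: n1 = m1, m3 = n3 - 1 ≥ 1 ; weights ((α+1)*(m3+1), m3+1, m3)
lemma case_e {n1 n2 n3 m1 m2 m3 a y1 y2 y3 : ℕ}
    (hm11 : 1 ≤ m1) (hm1n : n1 = m1) (hm21 : 1 ≤ m2) (hn2 : n2 = m2 + a) (ha : 1 ≤ a)
    (hm31 : 1 ≤ m3) (hn3 : n3 = m3 + 1)
    (hy1 : y1 ≤ n1) (hy2 : y2 ≤ n2) (hy3 : y3 ≤ n3) :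
    (m1 ≤ y1 ∧ m1 + m2 ≤ y1 + y2 ∧ m1 + m2 + m3 ≤ y1 + y2 + y3) ↔
      ((a+1)*(m3+1))*m1 + (m3+1)*m2 + m3*m3 ≤ ((a+1)*(m3+1))*y1 + (m3+1)*y2 + m3*y3 := by
  subst hn2 hn3
  rw [hm1n] at hy1
  constructor
  · rintro ⟨h1, h2, h3⟩
    exact q_le_of_win (by nlinarith) (by omega) h1 h2 h3
  · intro hq
    refine ⟨?_, ?_, ?_⟩
    · by_contra hc; push_neg at hc
      have h1 : y1 + 1 ≤ m1 := hc
      nlinarith [Nat.mul_le_mul_left ((a+1)*(m3+1)) h1, Nat.mul_le_mul_left (m3+1) hy2,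
        Nat.mul_le_mul_left m3 hy3]
    · by_contra hc; push_neg at hc
      have h2 : y1 + y2 + 1 ≤ m1 + m2 := by omega
      nlinarith [Nat.mul_le_mul_left (a*(m3+1)) hy1, Nat.mul_le_mul_left (m3+1) h2,
        Nat.mul_le_mul_left m3 hy3]
    · by_contra hc; push_neg at hc
      have h3 : y1 + y2 + y3 + 1 ≤ m1 + m2 + m3 := by omega
      nlinarith [Nat.mul_le_mul_left (a*(m3+1)) hy1, Nat.mul_le_mul_left (m3+1) h3]

theorem weighted_iff_char {n1 n2 n3 m1 m2 m3 : ℕ}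
    (hn3 : 1 ≤ n3) (hm11 : 1 ≤ m1) (hm1n : m1 ≤ n1)
    (hm21 : 1 ≤ m2) (hm2n : m2 ≤ n2 - 1) (hm3n : m3 ≤ n3 - 1) :
    IsWeightedGame (CGMinWinning ![n1,n2,n3] ![m1,m2,m3]) ↔
      ((m3 = 0 ∧ (m2 = 1 ∨ n2 = m2 + 1 ∨ n1 = m1)) ∨
       (1 ≤ m3 ∧ n1 = m1 ∧ (m3 = 1 ∨ m3 = n3 - 1))) := by
  have hn2 : m2 + 1 ≤ n2 := by
    rcases Nat.eq_zero_or_pos n2 with h | h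
    · omega
    · omega
  have hn3' : m3 + 1 ≤ n3 := by omega
  constructor
  · intro hW
    rcases Nat.eq_zero_or_pos m3 with h30 | h31
    · subst h30
      left
      refine ⟨rfl, ?_⟩
      by_contra hc
      push_neg at hc
      obtain ⟨h1, h2, h3⟩ := hc
      exact not_weighted_N1 hm11 (by omega) (by omega) (by omega) hW
    · right
      have hn1 : n1 = m1 := by
        by_contra hc
        exact not_weighted_N2 hm11 (by omega) hm21 hn2 h31 hn3' hW
      refine ⟨h31, hn1, ?_⟩
      by_contra hc
      push_neg at hc
      obtain ⟨h1, h2⟩ := hc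
      exact not_weighted_N3 hm11 hm1n hm21 hn2 (by omega) (by omega) hW
  · rintro (⟨h30, hcase⟩ | ⟨h31, hn1, hcase⟩)
    · subst h30
      rcases eq_or_ne m2 1 with h | hne1
      · subst h
        exact isWeighted_of_cases n2 1 0
          (by have : 0 < n2*m1 := Nat.mul_pos (by omega) (by omega); omega)
          (fun y1 y2 y3 h1 h2 h3 => case_a hm11 hm1n (by omega) h1 h2 h3)
      · rcases hcase with h | h | h
        · omega
        · exact isWeighted_of_cases (n1-m1+2) (n1-m1+1) 0
            (by have : 0 < (n1-m1+2)*m1 := Nat.mul_pos (by omega) (by omega); omega)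
            (fun y1 y2 y3 h1 h2 h3 =>
              case_b hm11 (by omega) hm21 h h1 h2 h3)
        · exact isWeighted_of_cases (n2-m2+1) 1 0
            (by have : 0 < (n2-m2+1)*m1 := Nat.mul_pos (by omega) (by omega); omega)
            (fun y1 y2 y3 h1 h2 h3 =>
              case_c hm11 h hm21 (by omega) (by omega) h1 h2 h3)
    · rcases hcase with h | h
      · subst h
        exact isWeighted_of_cases ((n2-m2)*((n3-1)+1)+(n3-1)+1) ((n3-1)+1) 1
          (by have : 0 < ((n2-m2)*((n3-1)+1)+(n3-1)+1)*m1 := Nat.mul_pos (by omega) (by omega); omega)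
          (fun y1 y2 y3 h1 h2 h3 =>
            case_d hm11 hn1 hm21 (by omega) (by omega) (by omega) (by omega) h1 h2 h3)
      · exact isWeighted_of_cases ((n2-m2+1)*(m3+1)) (m3+1) m3
          (by have : 0 < ((n2-m2+1)*(m3+1))*m1 := Nat.mul_pos (Nat.mul_pos (by omega) (by omega)) (by omega); omega)
          (fun y1 y2 y3 h1 h2 h3 =>
            case_e hm11 hn1 hm21 (by omega) (by omega) (by omega) (by omega) h1 h2 h3)

-- Gauss-type lemmas
lemma sum_id_choose (n : ℕ) : ∑ j ∈ range n, j = n.choose 2 := by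
  induction n with
  | zero => simp
  | succ m ih =>
    rw [Finset.sum_range_succ, ih]
    have h := Nat.choose_succ_succ m 1
    norm_num at h
    omega

lemma sum_tri (M : ℕ) : ∑ j ∈ range (M+1), j * (M - j) = (M+1).choose 3 := by
  induction M with
  | zero => decide
  | succ m ih =>
    have step : ∑ j ∈ range (m+2), j * (m+1-j) = ∑ j ∈ range (m+1), j * (m+1-j) := by
      rw [Finset.sum_range_succ]; simp
    rw [step]
    have split : ∀ j ∈ range (m+1), j * (m+1-j) = j * (m-j) + j := by
      intro j hj; rw [Finset.mem_range] at hj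
      have : m + 1 - j = (m - j) + 1 := by omega
      rw [this, Nat.mul_add, Nat.mul_one]
    rw [Finset.sum_congr rfl split, Finset.sum_add_distrib, ih, sum_id_choose]
    have h := Nat.choose_succ_succ (m+1) 2
    norm_num at h
    omega

-- the master sum
lemma sum_shift (s t n : ℕ) :
    ∑ k ∈ range (n+1), (k - s) * (n - k - t) = (n + 1 - s - t).choose 3 := by
  rcases Nat.lt_or_ge n (s + t) with h | h
  · have hz : ∀ k ∈ range (n+1), (k - s) * (n - k - t) = 0 := by
      intro k hk; rw [Finset.mem_range] at hk
      rcases Nat.lt_or_ge k s with h1 | h1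
      · have : k - s = 0 := by omega
        rw [this, Nat.zero_mul]
      · have : n - k - t = 0 := by omega
        rw [this, Nat.mul_zero]
    rw [Finset.sum_eq_zero hz]
    rw [Nat.choose_eq_zero_of_lt (by omega)]
  · set M := n - s - t with hM
    have h1 : ∑ k ∈ range (n+1), (k - s) * (n - k - t)
        = ∑ k ∈ Finset.Ico s (s + (M+1)), (k - s) * (n - k - t) := by
      apply (Finset.sum_subset ?_ ?_).symm
      · intro k hk; rw [Finset.mem_Ico] at hk; rw [Finset.mem_range]; omega
      · intro k hk hk2; rw [Finset.mem_range] at hk; rw [Finset.mem_Ico] at hk2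
        rcases Nat.lt_or_ge k s with h1 | h1
        · have : k - s = 0 := by omega
          rw [this, Nat.zero_mul]
        · have : n - k - t = 0 := by omega
          rw [this, Nat.mul_zero]
    rw [h1]
    rw [Finset.sum_Ico_eq_sum_range]
    have h2 : ∀ j ∈ range (s + (M+1) - s), (s + j - s) * (n - (s + j) - t) = j * (M - j) := by
      intro j hj
      have e1 : s + j - s = j := by omega
      have e2 : n - (s + j) - t = M - j := by omega
      rw [e1, e2]
    have e3 : s + (M+1) - s = M + 1 := by omega
    rw [e3] at h2 ⊢
    rw [Finset.sum_congr rfl h2, sum_tri]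
    congr 1
    omega

lemma six_mul_choose_three (j : ℕ) : 6 * j.choose 3 = j * (j-1) * (j-2) := by
  have key : ∀ m : ℕ, 6 * ((m+2).choose 3) = (m+2) * (m+1) * m := by
    intro m
    induction m with
    | zero => simp
    | succ p ih =>
      have two : ∀ q : ℕ, 2 * ((q+1).choose 2) = (q+1) * q := by
        intro q
        induction q with
        | zero => simp
        | succ r ihr =>
          rw [Nat.choose_succ_succ (r+1) 1, Nat.mul_add, ihr, Nat.choose_one_right]
          ring
      have h := Nat.choose_succ_succ (p+2) 2
      simp only [Nat.succ_eq_add_one] at h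
      rw [h, Nat.mul_add, ih]
      have h2 := two (p+1)
      nlinarith [h2]
  match j with
  | 0 => simp
  | 1 => decide
  | (m+2) =>
    have h := key m
    have e1 : m+2-1 = m+1 := by omega
    have e2 : m+2-2 = m := by omega
    rw [e1, e2, h]

open scoped Classical

abbrev Tup := ℕ × ℕ × ℕ × ℕ × ℕ × ℕ

noncomputable def Box (n : ℕ) : Finset Tup :=
  range (n+1) ×ˢ range (n+1) ×ˢ range (n+1) ×ˢ range (n+1) ×ˢ range (n+1) ×ˢ range (n+1)

def Base (n : ℕ) (p : Tup) : Prop :=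
  1 ≤ p.1 ∧ 1 ≤ p.2.1 ∧ 1 ≤ p.2.2.1 ∧ p.1 + p.2.1 + p.2.2.1 = n ∧
  1 ≤ p.2.2.2.1 ∧ p.2.2.2.1 ≤ p.1 ∧
  1 ≤ p.2.2.2.2.1 ∧ p.2.2.2.2.1 ≤ p.2.1 - 1 ∧ p.2.2.2.2.2 ≤ p.2.2.1 - 1

lemma base_iff (n a b c d e f : ℕ) : Base n (a,b,c,d,e,f) ↔
    (1 ≤ a ∧ 2 ≤ b ∧ 1 ≤ c ∧ a+b+c = n ∧ 1 ≤ d ∧ d ≤ a ∧ 1 ≤ e ∧ e + 1 ≤ b ∧ f + 1 ≤ c) := by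
  unfold Base
  dsimp only
  omega

lemma mem_box_iff (n a b c d e f : ℕ) : ((a,b,c,d,e,f) : Tup) ∈ Box n ↔
    (a < n+1 ∧ b < n+1 ∧ c < n+1 ∧ d < n+1 ∧ e < n+1 ∧ f < n+1) := by
  unfold Box
  simp [Finset.mem_product]

lemma mem_base_box (n a b c d e f : ℕ) (h : Base n (a,b,c,d,e,f)) :
    ((a,b,c,d,e,f) : Tup) ∈ Box n := by
  rw [base_iff] at h
  rw [mem_box_iff]
  omega

noncomputable def F1 (n : ℕ) : Finset Tup :=
  (Box n).filter fun p => Base n p ∧ p.2.2.2.2.1 = 1 ∧ p.2.2.2.2.2 = 0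

lemma mem_F1 (n a b c d e f : ℕ) : ((a,b,c,d,e,f) : Tup) ∈ F1 n ↔
    (1 ≤ a ∧ 2 ≤ b ∧ 1 ≤ c ∧ a+b+c = n ∧ 1 ≤ d ∧ d ≤ a ∧ e = 1 ∧ f = 0) := by
  unfold F1
  rw [Finset.mem_filter, base_iff, mem_box_iff]
  dsimp only
  omega

lemma F1_fiber (n k : ℕ) :
    ((F1 n).filter fun p => p.1 = k).card = k * (n - k - 2) := by
  have hbij : ((F1 n).filter fun p => p.1 = k).card
      = (Icc 1 k ×ˢ Icc 2 (n - k - 1)).card := by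
    refine Finset.card_bij' (fun p _ => (p.2.2.2.1, p.2.1))
      (fun q _ => (k, q.2, n - k - q.2, q.1, 1, 0)) ?hi ?hj ?li ?ri
    case hi =>
      rintro ⟨a, b, c, d, e, f⟩ hp
      rw [Finset.mem_filter, mem_F1] at hp
      simp only [Finset.mem_product, Finset.mem_Icc]
      dsimp only at hp ⊢
      omega
    case hj =>
      rintro ⟨u, v⟩ hq
      simp only [Finset.mem_product, Finset.mem_Icc] at hq
      rw [Finset.mem_filter, mem_F1]
      dsimp only
      omega
    case li =>
      rintro ⟨a, b, c, d, e, f⟩ hp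
      rw [Finset.mem_filter, mem_F1] at hp
      dsimp only at hp ⊢
      simp only [Prod.mk.injEq, true_and, and_true]
      omega
    case ri =>
      rintro ⟨u, v⟩ hq
      rfl
  rw [hbij, Finset.card_product, Nat.card_Icc, Nat.card_Icc]
  have e1 : k + 1 - 1 = k := by omega
  have e2 : n - k - 1 + 1 - 2 = n - k - 2 := by omega
  rw [e1, e2]

lemma F1_card (n : ℕ) : (F1 n).card = (n-1).choose 3 := by
  rw [Finset.card_eq_sum_card_fiberwise (f := fun p : Tup => p.1) (t := range (n+1))
    (by rintro ⟨a,b,c,d,e,f⟩ hp; rw [Finset.mem_coe, mem_F1] at hp; exact Finset.mem_coe.mpr (Finset.mem_range.mpr (show a < n+1 by omega)))]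
  have : ∀ k ∈ range (n+1), ((F1 n).filter fun p => p.1 = k).card = (k - 0) * (n - k - 2) := by
    intro k _; rw [F1_fiber, Nat.sub_zero]
  rw [Finset.sum_congr rfl this, sum_shift, show n + 1 - 0 - 2 = n - 1 from by omega]

noncomputable def F2 (n : ℕ) : Finset Tup :=
  (Box n).filter fun p => Base n p ∧ p.2.2.2.2.1 = p.2.1 - 1 ∧ 2 ≤ p.2.2.2.2.1 ∧ p.2.2.2.2.2 = 0

lemma mem_F2 (n a b c d e f : ℕ) : ((a,b,c,d,e,f) : Tup) ∈ F2 n ↔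
    (1 ≤ a ∧ 3 ≤ b ∧ 1 ≤ c ∧ a+b+c = n ∧ 1 ≤ d ∧ d ≤ a ∧ e = b - 1 ∧ f = 0) := by
  unfold F2
  rw [Finset.mem_filter, base_iff, mem_box_iff]
  dsimp only
  omega

lemma F2_fiber (n k : ℕ) :
    ((F2 n).filter fun p => p.1 = k).card = k * (n - k - 3) := by
  have hbij : ((F2 n).filter fun p => p.1 = k).card
      = (Icc 1 k ×ˢ Icc 3 (n - k - 1)).card := by
    refine Finset.card_bij' (fun p _ => (p.2.2.2.1, p.2.1))
      (fun q _ => (k, q.2, n - k - q.2, q.1, q.2 - 1, 0)) ?hi ?hj ?li ?ri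
    case hi =>
      rintro ⟨a, b, c, d, e, f⟩ hp
      rw [Finset.mem_filter, mem_F2] at hp
      simp only [Finset.mem_product, Finset.mem_Icc]
      dsimp only at hp ⊢
      omega
    case hj =>
      rintro ⟨u, v⟩ hq
      simp only [Finset.mem_product, Finset.mem_Icc] at hq
      rw [Finset.mem_filter, mem_F2]
      dsimp only
      omega
    case li =>
      rintro ⟨a, b, c, d, e, f⟩ hp
      rw [Finset.mem_filter, mem_F2] at hp
      dsimp only at hp ⊢
      simp only [Prod.mk.injEq, true_and, and_true]
      omega
    case ri =>
      rintro ⟨u, v⟩ hq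
      rfl
  rw [hbij, Finset.card_product, Nat.card_Icc, Nat.card_Icc]
  have e1 : k + 1 - 1 = k := by omega
  have e2 : n - k - 1 + 1 - 3 = n - k - 3 := by omega
  rw [e1, e2]

lemma F2_card (n : ℕ) : (F2 n).card = (n-2).choose 3 := by
  rw [Finset.card_eq_sum_card_fiberwise (f := fun p : Tup => p.1) (t := range (n+1))
    (by rintro ⟨a,b,c,d,e,f⟩ hp; rw [Finset.mem_coe, mem_F2] at hp; exact Finset.mem_coe.mpr (Finset.mem_range.mpr (show a < n+1 by omega)))]
  have : ∀ k ∈ range (n+1), ((F2 n).filter fun p => p.1 = k).card = (k - 0) * (n - k - 3) := by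
    intro k _; rw [F2_fiber, Nat.sub_zero]
  rw [Finset.sum_congr rfl this, sum_shift, show n + 1 - 0 - 3 = n - 2 from by omega]

noncomputable def F3 (n : ℕ) : Finset Tup :=
  (Box n).filter fun p => Base n p ∧ p.2.2.2.1 = p.1 ∧ 2 ≤ p.2.2.2.2.1 ∧
    p.2.2.2.2.1 + 2 ≤ p.2.1 ∧ p.2.2.2.2.2 = 0

lemma mem_F3 (n a b c d e f : ℕ) : ((a,b,c,d,e,f) : Tup) ∈ F3 n ↔
    (1 ≤ a ∧ 1 ≤ c ∧ a+b+c = n ∧ d = a ∧ 2 ≤ e ∧ e + 2 ≤ b ∧ f = 0) := by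
  unfold F3
  rw [Finset.mem_filter, base_iff, mem_box_iff]
  dsimp only
  omega

lemma F3_fiber (n k : ℕ) :
    ((F3 n).filter fun p => p.2.1 = k).card = (k - 3) * (n - k - 1) := by
  have hbij : ((F3 n).filter fun p => p.2.1 = k).card
      = (Icc 2 (k-2) ×ˢ Icc 1 (n - k - 1)).card := by
    refine Finset.card_bij' (fun p _ => (p.2.2.2.2.1, p.1))
      (fun q _ => (q.2, k, n - k - q.2, q.2, q.1, 0)) ?hi ?hj ?li ?ri
    case hi =>
      rintro ⟨a, b, c, d, e, f⟩ hp
      rw [Finset.mem_filter, mem_F3] at hp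
      simp only [Finset.mem_product, Finset.mem_Icc]
      dsimp only at hp ⊢
      omega
    case hj =>
      rintro ⟨u, v⟩ hq
      simp only [Finset.mem_product, Finset.mem_Icc] at hq
      rw [Finset.mem_filter, mem_F3]
      dsimp only
      omega
    case li =>
      rintro ⟨a, b, c, d, e, f⟩ hp
      rw [Finset.mem_filter, mem_F3] at hp
      dsimp only at hp ⊢
      simp only [Prod.mk.injEq, true_and, and_true]
      omega
    case ri =>
      rintro ⟨u, v⟩ hq
      rfl
  rw [hbij, Finset.card_product, Nat.card_Icc, Nat.card_Icc]
  have e1 : k - 2 + 1 - 2 = k - 3 := by omega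
  have e2 : n - k - 1 + 1 - 1 = n - k - 1 := by omega
  rw [e1, e2]

lemma F3_card (n : ℕ) : (F3 n).card = (n-3).choose 3 := by
  rw [Finset.card_eq_sum_card_fiberwise (f := fun p : Tup => p.2.1) (t := range (n+1))
    (by rintro ⟨a,b,c,d,e,f⟩ hp; rw [Finset.mem_coe, mem_F3] at hp; exact Finset.mem_coe.mpr (Finset.mem_range.mpr (show b < n+1 by omega)))]
  have : ∀ k ∈ range (n+1), ((F3 n).filter fun p => p.2.1 = k).card = (k - 3) * (n - k - 1) := by
    intro k _; rw [F3_fiber]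
  rw [Finset.sum_congr rfl this, sum_shift, show n + 1 - 3 - 1 = n - 3 from by omega]

noncomputable def F4 (n : ℕ) : Finset Tup :=
  (Box n).filter fun p => Base n p ∧ p.2.2.2.1 = p.1 ∧ p.2.2.2.2.2 = 1

lemma mem_F4 (n a b c d e f : ℕ) : ((a,b,c,d,e,f) : Tup) ∈ F4 n ↔
    (1 ≤ a ∧ 2 ≤ c ∧ a+b+c = n ∧ d = a ∧ 1 ≤ e ∧ e + 1 ≤ b ∧ f = 1) := by
  unfold F4
  rw [Finset.mem_filter, base_iff, mem_box_iff]
  dsimp only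
  omega

lemma F4_fiber (n k : ℕ) :
    ((F4 n).filter fun p => p.2.1 = k).card = (k - 1) * (n - k - 2) := by
  have hbij : ((F4 n).filter fun p => p.2.1 = k).card
      = (Icc 1 (k-1) ×ˢ Icc 1 (n - k - 2)).card := by
    refine Finset.card_bij' (fun p _ => (p.2.2.2.2.1, p.1))
      (fun q _ => (q.2, k, n - k - q.2, q.2, q.1, 1)) ?hi ?hj ?li ?ri
    case hi =>
      rintro ⟨a, b, c, d, e, f⟩ hp
      rw [Finset.mem_filter, mem_F4] at hp
      simp only [Finset.mem_product, Finset.mem_Icc]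
      dsimp only at hp ⊢
      omega
    case hj =>
      rintro ⟨u, v⟩ hq
      simp only [Finset.mem_product, Finset.mem_Icc] at hq
      rw [Finset.mem_filter, mem_F4]
      dsimp only
      omega
    case li =>
      rintro ⟨a, b, c, d, e, f⟩ hp
      rw [Finset.mem_filter, mem_F4] at hp
      dsimp only at hp ⊢
      simp only [Prod.mk.injEq, true_and, and_true]
      omega
    case ri =>
      rintro ⟨u, v⟩ hq
      rfl
  rw [hbij, Finset.card_product, Nat.card_Icc, Nat.card_Icc]
  have e1 : k - 1 + 1 - 1 = k - 1 := by omega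
  have e2 : n - k - 2 + 1 - 1 = n - k - 2 := by omega
  rw [e1, e2]

lemma F4_card (n : ℕ) : (F4 n).card = (n-2).choose 3 := by
  rw [Finset.card_eq_sum_card_fiberwise (f := fun p : Tup => p.2.1) (t := range (n+1))
    (by rintro ⟨a,b,c,d,e,f⟩ hp; rw [Finset.mem_coe, mem_F4] at hp; exact Finset.mem_coe.mpr (Finset.mem_range.mpr (show b < n+1 by omega)))]
  have : ∀ k ∈ range (n+1), ((F4 n).filter fun p => p.2.1 = k).card = (k - 1) * (n - k - 2) := by
    intro k _; rw [F4_fiber]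
  rw [Finset.sum_congr rfl this, sum_shift, show n + 1 - 1 - 2 = n - 2 from by omega]

noncomputable def F5 (n : ℕ) : Finset Tup :=
  (Box n).filter fun p => Base n p ∧ p.2.2.2.1 = p.1 ∧ p.2.2.2.2.2 = p.2.2.1 - 1 ∧
    2 ≤ p.2.2.2.2.2

lemma mem_F5 (n a b c d e f : ℕ) : ((a,b,c,d,e,f) : Tup) ∈ F5 n ↔
    (1 ≤ a ∧ 3 ≤ c ∧ a+b+c = n ∧ d = a ∧ 1 ≤ e ∧ e + 1 ≤ b ∧ f = c - 1) := by
  unfold F5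
  rw [Finset.mem_filter, base_iff, mem_box_iff]
  dsimp only
  omega

lemma F5_fiber (n k : ℕ) :
    ((F5 n).filter fun p => p.2.1 = k).card = (k - 1) * (n - k - 3) := by
  have hbij : ((F5 n).filter fun p => p.2.1 = k).card
      = (Icc 1 (k-1) ×ˢ Icc 1 (n - k - 3)).card := by
    refine Finset.card_bij' (fun p _ => (p.2.2.2.2.1, p.1))
      (fun q _ => (q.2, k, n - k - q.2, q.2, q.1, n - k - q.2 - 1)) ?hi ?hj ?li ?ri
    case hi =>
      rintro ⟨a, b, c, d, e, f⟩ hp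
      rw [Finset.mem_filter, mem_F5] at hp
      simp only [Finset.mem_product, Finset.mem_Icc]
      dsimp only at hp ⊢
      omega
    case hj =>
      rintro ⟨u, v⟩ hq
      simp only [Finset.mem_product, Finset.mem_Icc] at hq
      rw [Finset.mem_filter, mem_F5]
      dsimp only
      omega
    case li =>
      rintro ⟨a, b, c, d, e, f⟩ hp
      rw [Finset.mem_filter, mem_F5] at hp
      dsimp only at hp ⊢
      simp only [Prod.mk.injEq, true_and, and_true]
      omega
    case ri =>
      rintro ⟨u, v⟩ hq
      rfl
  rw [hbij, Finset.card_product, Nat.card_Icc, Nat.card_Icc]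
  have e1 : k - 1 + 1 - 1 = k - 1 := by omega
  have e2 : n - k - 3 + 1 - 1 = n - k - 3 := by omega
  rw [e1, e2]

lemma F5_card (n : ℕ) : (F5 n).card = (n-3).choose 3 := by
  rw [Finset.card_eq_sum_card_fiberwise (f := fun p : Tup => p.2.1) (t := range (n+1))
    (by rintro ⟨a,b,c,d,e,f⟩ hp; rw [Finset.mem_coe, mem_F5] at hp; exact Finset.mem_coe.mpr (Finset.mem_range.mpr (show b < n+1 by omega)))]
  have : ∀ k ∈ range (n+1), ((F5 n).filter fun p => p.2.1 = k).card = (k - 1) * (n - k - 3) := by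
    intro k _; rw [F5_fiber]
  rw [Finset.sum_congr rfl this, sum_shift, show n + 1 - 1 - 3 = n - 3 from by omega]

-- NEW
noncomputable def FAll (n : ℕ) : Finset Tup :=
  (Box n).filter fun p => Base n p ∧
    ((p.2.2.2.2.2 = 0 ∧ (p.2.2.2.2.1 = 1 ∨ p.2.1 = p.2.2.2.2.1 + 1 ∨ p.1 = p.2.2.2.1)) ∨
     (1 ≤ p.2.2.2.2.2 ∧ p.1 = p.2.2.2.1 ∧ (p.2.2.2.2.2 = 1 ∨ p.2.2.2.2.2 = p.2.2.1 - 1)))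

lemma mem_FAll (n a b c d e f : ℕ) : ((a,b,c,d,e,f) : Tup) ∈ FAll n ↔
    ((1 ≤ a ∧ 2 ≤ b ∧ 1 ≤ c ∧ a+b+c = n ∧ 1 ≤ d ∧ d ≤ a ∧ 1 ≤ e ∧ e + 1 ≤ b ∧ f + 1 ≤ c) ∧
     ((f = 0 ∧ (e = 1 ∨ b = e + 1 ∨ a = d)) ∨ (1 ≤ f ∧ a = d ∧ (f = 1 ∨ f = c - 1)))) := by
  unfold FAll
  rw [Finset.mem_filter, base_iff, mem_box_iff]
  dsimp only
  omega

lemma FAll_union (n : ℕ) : FAll n = F1 n ∪ (F2 n ∪ (F3 n ∪ (F4 n ∪ F5 n))) := by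
  ext ⟨a, b, c, d, e, f⟩
  simp only [Finset.mem_union, mem_FAll, mem_F1, mem_F2, mem_F3, mem_F4, mem_F5]
  omega

lemma FAll_card (n : ℕ) :
    (FAll n).card = (n-1).choose 3 + 2 * (n-2).choose 3 + 2 * (n-3).choose 3 := by
  have d12 : Disjoint (F1 n) (F2 n ∪ (F3 n ∪ (F4 n ∪ F5 n))) := by
    rw [Finset.disjoint_left]
    rintro ⟨a,b,c,d,e,f⟩ h1 h2
    simp only [Finset.mem_union, mem_F1, mem_F2, mem_F3, mem_F4, mem_F5] at h1 h2
    omega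
  have d23 : Disjoint (F2 n) (F3 n ∪ (F4 n ∪ F5 n)) := by
    rw [Finset.disjoint_left]
    rintro ⟨a,b,c,d,e,f⟩ h1 h2
    simp only [Finset.mem_union, mem_F2, mem_F3, mem_F4, mem_F5] at h1 h2
    omega
  have d34 : Disjoint (F3 n) (F4 n ∪ F5 n) := by
    rw [Finset.disjoint_left]
    rintro ⟨a,b,c,d,e,f⟩ h1 h2
    simp only [Finset.mem_union, mem_F3, mem_F4, mem_F5] at h1 h2
    omega
  have d45 : Disjoint (F4 n) (F5 n) := by
    rw [Finset.disjoint_left]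
    rintro ⟨a,b,c,d,e,f⟩ h1 h2
    simp only [mem_F4, mem_F5] at h1 h2
    omega
  rw [FAll_union, Finset.card_union_of_disjoint d12, Finset.card_union_of_disjoint d23,
    Finset.card_union_of_disjoint d34, Finset.card_union_of_disjoint d45,
    F1_card, F2_card, F3_card, F4_card, F5_card]
  ring

lemma count_eq_card (n : ℕ) : weightedTriCount n = (FAll n).card := by
  have hset : {p : ℕ × ℕ × ℕ × ℕ × ℕ × ℕ |
      1 ≤ p.1 ∧ 1 ≤ p.2.1 ∧ 1 ≤ p.2.2.1 ∧ p.1 + p.2.1 + p.2.2.1 = n ∧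
      1 ≤ p.2.2.2.1 ∧ p.2.2.2.1 ≤ p.1 ∧
      1 ≤ p.2.2.2.2.1 ∧ p.2.2.2.2.1 ≤ p.2.1 - 1 ∧
      p.2.2.2.2.2 ≤ p.2.2.1 - 1 ∧
      IsWeightedGame (CGMinWinning ![p.1, p.2.1, p.2.2.1]
        ![p.2.2.2.1, p.2.2.2.2.1, p.2.2.2.2.2])} = ↑(FAll n) := by
    ext ⟨a, b, c, d, e, f⟩
    simp only [Set.mem_setOf_eq, Finset.coe_insert, Finset.mem_coe]
    rw [mem_FAll]
    constructor
    · rintro ⟨h1, h2, h3, h4, h5, h6, h7, h8, h9, hW⟩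
      rw [weighted_iff_char h3 h5 h6 h7 h8 h9] at hW
      omega
    · intro h
      have hb : 2 ≤ b := h.1.2.1
      refine ⟨by omega, by omega, by omega, by omega, by omega, by omega, by omega,
        by omega, by omega, ?_⟩
      rw [weighted_iff_char (by omega) (by omega) (by omega) (by omega) (by omega) (by omega)]
      omega
  unfold weightedTriCount
  rw [hset]
  exact Set.ncard_coe_finset _

lemma choose3_q (j : ℕ) : ((j.choose 3 : ℕ) : ℚ) = (j : ℚ) * ((j : ℚ) - 1) * ((j : ℚ) - 2) / 6 := by
  match j with
  | 0 => norm_num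
  | 1 => norm_num [Nat.choose]
  | (m+2) =>
    have h := six_mul_choose_three (m+2)
    have e1 : m+2-1 = m+1 := by omega
    have e2 : m+2-2 = m := by omega
    rw [e1, e2] at h
    have h2 : (6:ℚ) * (((m+2).choose 3 : ℕ) : ℚ) = ((m+2):ℚ) * ((m+1):ℚ) * (m:ℚ) := by
      exact_mod_cast h
    push_cast at h2 ⊢
    linarith


theorem count_weighted_tripartite_min (n : ℕ) :
    (4 ≤ n → (weightedTriCount n : ℚ) =
      (5 * (n : ℚ) ^ 3 - 48 * (n : ℚ) ^ 2 + 157 * (n : ℚ) - 174) / 6) ∧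
    (n ≤ 3 → weightedTriCount n = 0) := by
  constructor
  · intro hn
    rw [count_eq_card, FAll_card]
    push_cast [choose3_q]
    have e1 : ((n - 1 : ℕ) : ℚ) = (n : ℚ) - 1 := by
      rw [Nat.cast_sub (by omega)]; norm_num
    have e2 : ((n - 2 : ℕ) : ℚ) = (n : ℚ) - 2 := by
      rw [Nat.cast_sub (by omega)]; norm_num
    have e3 : ((n - 3 : ℕ) : ℚ) = (n : ℚ) - 3 := by
      rw [Nat.cast_sub (by omega)]; norm_num
    rw [e1, e2, e3]
    field_simp
    ring
  · intro hn
    rw [count_eq_card, FAll_card]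
    rw [Nat.choose_eq_zero_of_lt (by omega), Nat.choose_eq_zero_of_lt (by omega),
      Nat.choose_eq_zero_of_lt (by omega)]
end

section
/- Let t ≥ 5, let n₁,…,n_t ≥ 1 be integers, and let m₁,…,m_t be integers satisfying 1 ≤ m₁ ≤ n₁, 1 ≤ m_h ≤ n_h − 1 for 2 ≤ h ≤ t−1, and 0 ≤ m_t ≤ n_t − 1. Then the complete game with minimum (m₁,…,m_t) is not weighted. Equivalently, there is no weighted game with one shift-minimal winning vector and five or more equivalence classes of players. -/
open Finset

variable {t : ℕ} (nvec : Fin t → ℕ)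

def off (h : Fin t) : ℕ := ∑ h' ∈ Finset.Iio h, nvec h'

def coal (lo len : Fin t → ℕ) : Finset (Fin (∑ h, nvec h)) :=
  Finset.univ.filter fun i =>
    ∃ h, off nvec h + lo h ≤ (i : ℕ) ∧ (i : ℕ) < off nvec h + lo h + len h

lemma off_add_le {h h' : Fin t} (hlt : h < h') : off nvec h + nvec h ≤ off nvec h' := by
  have hsub : insert h (Finset.Iio h) ⊆ Finset.Iio h' := by
    intro a ha
    rcases Finset.mem_insert.mp ha with rfl | ha
    · exact Finset.mem_Iio.mpr hlt
    · exact Finset.mem_Iio.mpr (lt_trans (Finset.mem_Iio.mp ha) hlt)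
  have h2 : off nvec h + nvec h = ∑ a ∈ insert h (Finset.Iio h), nvec a := by
    rw [Finset.sum_insert (by simp)]
    simp only [off]
    ring
  rw [h2]
  exact Finset.sum_le_sum_of_subset hsub

lemma off_add_le_univ (h : Fin t) : off nvec h + nvec h ≤ ∑ h', nvec h' := by
  have h2 : off nvec h + nvec h = ∑ a ∈ insert h (Finset.Iio h), nvec a := by
    rw [Finset.sum_insert (by simp)]
    simp only [off]
    ring
  rw [h2]
  exact Finset.sum_le_sum_of_subset (Finset.subset_univ _)

lemma block_unique {h h' : Fin t} {i : ℕ}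
    (a1 : off nvec h ≤ i) (a2 : i < off nvec h + nvec h)
    (b1 : off nvec h' ≤ i) (b2 : i < off nvec h' + nvec h') : h = h' := by
  by_contra hne
  rcases lt_or_gt_of_ne hne with hlt | hlt
  · have := off_add_le nvec hlt; omega
  · have := off_add_le nvec hlt; omega

lemma block_exists (ht : 0 < t) {i : ℕ} (hi : i < ∑ h, nvec h) :
    ∃ h : Fin t, off nvec h ≤ i ∧ i < off nvec h + nvec h := by
  by_contra hcon
  push_neg at hcon
  have key : ∀ k, ∀ (hk : k < t), off nvec ⟨k, hk⟩ ≤ i := by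
    intro k
    induction k with
    | zero =>
      intro hk
      have he : Finset.Iio (⟨0, hk⟩ : Fin t) = ∅ := by
        ext a; simp [Fin.lt_def]
      simp [off, he]
    | succ k ih =>
      intro hk
      have hk' : k < t := by omega
      have h1 := hcon ⟨k, hk'⟩ (ih hk')
      have hins : Finset.Iio (⟨k + 1, hk⟩ : Fin t) = insert ⟨k, hk'⟩ (Finset.Iio ⟨k, hk'⟩) := by
        ext a
        simp only [Finset.mem_Iio, Fin.lt_def, Finset.mem_insert, Fin.ext_iff]
        omega
      have hstep : off nvec ⟨k + 1, hk⟩ = nvec ⟨k, hk'⟩ + off nvec ⟨k, hk'⟩ := by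
        simp only [off, hins]
        rw [Finset.sum_insert (by simp)]
      omega
  have hlt : t - 1 < t := by omega
  have h1 := hcon ⟨t - 1, hlt⟩ (key (t - 1) hlt)
  have huniv : (Finset.univ : Finset (Fin t)) = insert ⟨t - 1, hlt⟩ (Finset.Iio ⟨t - 1, hlt⟩) := by
    ext a
    simp only [Finset.mem_univ, true_iff, Finset.mem_insert, Finset.mem_Iio, Fin.lt_def,
      Fin.ext_iff]
    have := a.isLt
    omega
  rw [huniv, Finset.sum_insert (by simp)] at hi
  simp only [off] at h1
  omega

lemma mem_coal {lo len : Fin t → ℕ} (hfeas : ∀ h, lo h + len h ≤ nvec h) {h : Fin t}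
    {i : Fin (∑ h, nvec h)} (h1 : off nvec h ≤ (i : ℕ)) (h2 : (i : ℕ) < off nvec h + nvec h) :
    i ∈ coal nvec lo len ↔
      (off nvec h + lo h ≤ (i : ℕ) ∧ (i : ℕ) < off nvec h + lo h + len h) := by
  simp only [coal, Finset.mem_filter, Finset.mem_univ, true_and]
  constructor
  · rintro ⟨h', ha, hb⟩
    have hfe := hfeas h'
    have heq : h' = h := block_unique nvec (by omega) (by omega) h1 h2
    subst heq
    exact ⟨ha, hb⟩
  · intro hh
    exact ⟨h, hh.1, hh.2⟩

lemma blockCount_coal {lo len : Fin t → ℕ} (hfeas : ∀ h, lo h + len h ≤ nvec h) (h : Fin t) :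
    blockCount nvec (coal nvec lo len) h = len h := by
  have hfe := hfeas h
  have hbnd : off nvec h + lo h + len h ≤ ∑ h', nvec h' := by
    have := off_add_le_univ nvec h; omega
  have hkey : (coal nvec lo len).filter (fun i : Fin (∑ h, nvec h) =>
      (∑ h' ∈ Finset.Iio h, nvec h') ≤ (i : ℕ) ∧
        (i : ℕ) < (∑ h' ∈ Finset.Iio h, nvec h') + nvec h)
      = Finset.univ.filter (fun i : Fin (∑ h, nvec h) =>
        off nvec h + lo h ≤ (i : ℕ) ∧ (i : ℕ) < off nvec h + lo h + len h) := by
    ext i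
    simp only [Finset.mem_filter, Finset.mem_univ, true_and]
    constructor
    · rintro ⟨hi, hb1, hb2⟩
      exact (mem_coal nvec hfeas (h := h) hb1 hb2).mp hi
    · intro hi
      have hb1 : off nvec h ≤ (i : ℕ) := by omega
      have hb2 : (i : ℕ) < off nvec h + nvec h := by omega
      refine ⟨(mem_coal nvec hfeas (h := h) hb1 hb2).mpr hi, ?_, ?_⟩
      · exact hb1
      · exact hb2
  have himg : (Finset.univ.filter (fun i : Fin (∑ h, nvec h) =>
      off nvec h + lo h ≤ (i : ℕ) ∧ (i : ℕ) < off nvec h + lo h + len h)).image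
        Fin.val
      = Finset.Ico (off nvec h + lo h) (off nvec h + lo h + len h) := by
    ext x
    simp only [Finset.mem_image, Finset.mem_filter, Finset.mem_univ, true_and, Finset.mem_Ico]
    constructor
    · rintro ⟨a, ha, rfl⟩; exact ha
    · rintro ⟨hx1, hx2⟩
      exact ⟨⟨x, lt_of_lt_of_le hx2 hbnd⟩, ⟨hx1, hx2⟩, rfl⟩
  unfold blockCount
  rw [hkey]
  have := Finset.card_image_of_injective (Finset.univ.filter (fun i : Fin (∑ h, nvec h) =>
      off nvec h + lo h ≤ (i : ℕ) ∧ (i : ℕ) < off nvec h + lo h + len h))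
    (Fin.val_injective)
  rw [← this, himg, Nat.card_Ico]
  omega



def lo1 : Fin t → ℕ := fun _ => 0
def len1 (mvec : Fin t → ℕ) : Fin t → ℕ := fun h => if (h : ℕ) = 4 then mvec h + 1 else mvec h
def lo2 : Fin t → ℕ := fun h => if 1 ≤ (h : ℕ) ∧ (h : ℕ) ≤ 3 then 1 else 0
def lo3 : Fin t → ℕ := fun h => if (h : ℕ) = 1 then 1 else 0
def len3 (mvec : Fin t → ℕ) : Fin t → ℕ := fun h =>
  if (h : ℕ) = 1 then mvec h - 1 else if (h : ℕ) = 2 ∨ (h : ℕ) = 3 then mvec h + 1 else mvec h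
def lo4 : Fin t → ℕ := fun h => if (h : ℕ) = 2 ∨ (h : ℕ) = 3 then 1 else 0
def len4 (mvec : Fin t → ℕ) : Fin t → ℕ := fun h =>
  if (h : ℕ) = 1 ∨ (h : ℕ) = 4 then mvec h + 1
  else if (h : ℕ) = 2 ∨ (h : ℕ) = 3 then mvec h - 1 else mvec h



set_option maxHeartbeats 1000000 in
theorem no_weighted_game_with_five_or_more_classes (t : ℕ) (ht : 5 ≤ t)
    (nvec mvec : Fin t → ℕ) (hn : ∀ h, 1 ≤ nvec h)
    (hm1 : 1 ≤ mvec ⟨0, by omega⟩) (hm1' : mvec ⟨0, by omega⟩ ≤ nvec ⟨0, by omega⟩)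
    (hmid : ∀ h : Fin t, 1 ≤ (h : ℕ) → (h : ℕ) ≤ t - 2 → 1 ≤ mvec h ∧ mvec h ≤ nvec h - 1)
    (hlast : mvec ⟨t - 1, by omega⟩ ≤ nvec ⟨t - 1, by omega⟩ - 1) :
    ¬ IsWeightedGame (CGMinWinning nvec mvec) := by

  rintro ⟨w, q, -, hq, hWin⟩
  have h0t : 0 < t := by omega
  -- key arithmetic facts about mvec/nvec
  have hkeys : ∀ h : Fin t, mvec h ≤ nvec h ∧
      (1 ≤ (h : ℕ) → (h : ℕ) ≤ 4 → mvec h + 1 ≤ nvec h) ∧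
      (1 ≤ (h : ℕ) → (h : ℕ) ≤ 3 → 1 ≤ mvec h) := by
    intro h
    have hnh := hn h
    have hvlt := h.isLt
    by_cases hc : (h : ℕ) = 0
    · have he : h = ⟨0, h0t⟩ := Fin.ext hc
      refine ⟨by rw [he]; exact hm1', fun h1 _ => by omega, fun h1 _ => by omega⟩
    · by_cases hc2 : (h : ℕ) ≤ t - 2
      · have hx := hmid h (by omega) hc2
        exact ⟨by omega, fun _ _ => by omega, fun _ _ => hx.1⟩
      · have hval : (h : ℕ) = t - 1 := by omega
        have he : h = ⟨t - 1, by omega⟩ := Fin.ext hval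
        have hl2 : mvec h ≤ nvec h - 1 := by rw [he]; exact hlast
        exact ⟨by omega, fun _ _ => by omega, fun _ h3 => by omega⟩
  -- feasibility of the four coalitions
  have hf1 : ∀ h : Fin t, lo1 h + len1 mvec h ≤ nvec h := by
    intro h
    obtain ⟨k1, k2, k3⟩ := hkeys h
    simp only [lo1, len1]
    split_ifs <;> omega
  have hf2 : ∀ h : Fin t, lo2 h + mvec h ≤ nvec h := by
    intro h
    obtain ⟨k1, k2, k3⟩ := hkeys h
    simp only [lo2]
    split_ifs with hc <;> omega
  have hf3 : ∀ h : Fin t, lo3 h + len3 mvec h ≤ nvec h := by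
    intro h
    obtain ⟨k1, k2, k3⟩ := hkeys h
    simp only [lo3, len3]
    split_ifs <;> omega
  have hf4 : ∀ h : Fin t, lo4 h + len4 mvec h ≤ nvec h := by
    intro h
    obtain ⟨k1, k2, k3⟩ := hkeys h
    simp only [lo4, len4]
    split_ifs <;> omega
  -- the four coalitions
  -- S1 wins
  have hS1win : CGMinWinning nvec mvec (coal nvec lo1 (len1 mvec)) := by
    intro k
    rw [Finset.sum_congr rfl (fun h _ => blockCount_coal nvec hf1 h)]
    refine Finset.sum_le_sum fun h _ => ?_
    simp only [len1]
    split_ifs <;> omega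
  -- S2 wins
  have hS2win : CGMinWinning nvec mvec (coal nvec lo2 mvec) := by
    intro k
    rw [Finset.sum_congr rfl (fun h _ => blockCount_coal nvec hf2 h)]
  -- helper Fin elements
  have p0 : (0 : ℕ) < t := by omega
  have p1 : (1 : ℕ) < t := by omega
  have p2 : (2 : ℕ) < t := by omega
  have p3 : (3 : ℕ) < t := by omega
  -- T1 loses
  have hT1lose : ¬ CGMinWinning nvec mvec (coal nvec lo3 (len3 mvec)) := by
    intro hcon
    have hk := hcon ⟨1, p1⟩
    rw [Finset.sum_congr rfl (fun h _ => blockCount_coal nvec hf3 h)] at hk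
    have hIic : Finset.Iic (⟨1, p1⟩ : Fin t) = {⟨0, p0⟩, ⟨1, p1⟩} := by
      ext a
      simp only [Finset.mem_Iic, Fin.le_def, Finset.mem_insert, Finset.mem_singleton, Fin.ext_iff]
      omega
    have hne01 : (⟨0, p0⟩ : Fin t) ≠ ⟨1, p1⟩ := by simp [Fin.ext_iff]
    rw [hIic, Finset.sum_pair hne01, Finset.sum_pair hne01] at hk
    have e0 : len3 mvec ⟨0, p0⟩ = mvec ⟨0, p0⟩ := by simp [len3]
    have e1 : len3 mvec ⟨1, p1⟩ = mvec ⟨1, p1⟩ - 1 := by simp [len3]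
    rw [e0, e1] at hk
    have h1m : 1 ≤ mvec ⟨1, p1⟩ := (hkeys ⟨1, p1⟩).2.2 (by simp) (by simp)
    omega
  -- T2 loses
  have hT2lose : ¬ CGMinWinning nvec mvec (coal nvec lo4 (len4 mvec)) := by
    intro hcon
    have hk := hcon ⟨3, p3⟩
    rw [Finset.sum_congr rfl (fun h _ => blockCount_coal nvec hf4 h)] at hk
    have hIic : Finset.Iic (⟨3, p3⟩ : Fin t)
        = {⟨0, p0⟩, ⟨1, p1⟩, ⟨2, p2⟩, ⟨3, p3⟩} := by
      ext a
      simp only [Finset.mem_Iic, Fin.le_def, Finset.mem_insert, Finset.mem_singleton, Fin.ext_iff]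
      omega
    have hne0 : (⟨0, p0⟩ : Fin t) ∉ ({⟨1, p1⟩, ⟨2, p2⟩, ⟨3, p3⟩} : Finset (Fin t)) := by
      simp [Fin.ext_iff]
    have hne1 : (⟨1, p1⟩ : Fin t) ∉ ({⟨2, p2⟩, ⟨3, p3⟩} : Finset (Fin t)) := by
      simp [Fin.ext_iff]
    have hne23 : (⟨2, p2⟩ : Fin t) ≠ ⟨3, p3⟩ := by simp [Fin.ext_iff]
    have esum : ∀ f : Fin t → ℕ,
        (∑ h' ∈ ({⟨0, p0⟩, ⟨1, p1⟩, ⟨2, p2⟩, ⟨3, p3⟩} : Finset (Fin t)), f h')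
          = f ⟨0, p0⟩ + (f ⟨1, p1⟩ + (f ⟨2, p2⟩ + f ⟨3, p3⟩)) := by
      intro f
      rw [Finset.sum_insert hne0, Finset.sum_insert hne1, Finset.sum_pair hne23]
    rw [hIic, esum, esum] at hk
    have e0 : len4 mvec ⟨0, p0⟩ = mvec ⟨0, p0⟩ := by simp [len4]
    have e1 : len4 mvec ⟨1, p1⟩ = mvec ⟨1, p1⟩ + 1 := by simp [len4]
    have e2 : len4 mvec ⟨2, p2⟩ = mvec ⟨2, p2⟩ - 1 := by simp [len4]
    have e3 : len4 mvec ⟨3, p3⟩ = mvec ⟨3, p3⟩ - 1 := by simp [len4]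
    rw [e0, e1, e2, e3] at hk
    have h2m : 1 ≤ mvec ⟨2, p2⟩ := (hkeys ⟨2, p2⟩).2.2 (by simp) (by simp)
    have h3m : 1 ≤ mvec ⟨3, p3⟩ := (hkeys ⟨3, p3⟩).2.2 (by simp) (by simp)
    omega
  -- weight-sum trade equality
  have hsum : (∑ i ∈ coal nvec lo1 (len1 mvec), w i) + ∑ i ∈ coal nvec lo2 mvec, w i
      = (∑ i ∈ coal nvec lo3 (len3 mvec), w i) + ∑ i ∈ coal nvec lo4 (len4 mvec), w i := by
    have e : ∀ S : Finset (Fin (∑ h, nvec h)),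
        ∑ i ∈ S, w i = ∑ i : Fin (∑ h, nvec h), if i ∈ S then w i else 0 := by
      intro S
      rw [Finset.sum_ite_mem, Finset.univ_inter]
    rw [e (coal nvec lo1 (len1 mvec)), e (coal nvec lo2 mvec), e (coal nvec lo3 (len3 mvec)),
      e (coal nvec lo4 (len4 mvec)), ← Finset.sum_add_distrib, ← Finset.sum_add_distrib]
    refine Finset.sum_congr rfl fun i _ => ?_
    obtain ⟨h, hb1, hb2⟩ := block_exists nvec h0t i.isLt
    obtain ⟨k1, k2, k3⟩ := hkeys h
    rw [if_congr (mem_coal nvec hf1 hb1 hb2) rfl rfl,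
      if_congr (mem_coal nvec hf2 hb1 hb2) rfl rfl,
      if_congr (mem_coal nvec hf3 hb1 hb2) rfl rfl,
      if_congr (mem_coal nvec hf4 hb1 hb2) rfl rfl]
    rcases (show (h : ℕ) = 0 ∨ (h : ℕ) = 1 ∨ (h : ℕ) = 2 ∨ (h : ℕ) = 3 ∨ (h : ℕ) = 4 ∨
        5 ≤ (h : ℕ) by omega) with hc | hc | hc | hc | hc | hc <;>
      simp only [lo1, lo2, lo3, lo4, len1, len3, len4, hc] <;>
      norm_num <;>
      split_ifs <;> first | ring1 | (exfalso; omega)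
  have hS1 : q ≤ ∑ i ∈ coal nvec lo1 (len1 mvec), w i := (hWin _).mp hS1win
  have hS2 : q ≤ ∑ i ∈ coal nvec lo2 mvec, w i := (hWin _).mp hS2win
  have hT1 : ¬ q ≤ ∑ i ∈ coal nvec lo3 (len3 mvec), w i := fun hc => hT1lose ((hWin _).mpr hc)
  have hT2 : ¬ q ≤ ∑ i ∈ coal nvec lo4 (len4 mvec), w i := fun hc => hT2lose ((hWin _).mpr hc)
  push_neg at hT1 hT2
  linarith
end
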